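/- arXiv:2404.16782 — 8 statements merged into one kernel-verified Lean document; each statement's English description precedes it below -/
import Mathlib

section
/- Let R be a commutative ℚ-algebra and let f ∈ R⟦x⟧ be a formal power series with constant coefficient 1. Then, as formal power series in a variable z, exp( ∑_{k≥1} (1/k)·(coefficient of x^k in f^k)·z^k ) = ∑_{k≥1} (1/k)·(coefficient of x^{k−1} in f^k)·z^{k−1}. (Note that the k=1 term of the right-hand side is 1, so both sides have constant coefficient 1.) -/
open PowerSeries Finset

noncomputable section

/-- Evaluation of the power series `g` at the power series `f`
(formal composition `g ∘ f`, meaningful when `f` has zero constant term: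
the coefficient of `x^n` in `g(f)` is `∑_{k ≤ n} g_k · [x^n] f^k`). -/
def PowerSeries.substInto {R : Type*} [CommRing R] (f g : PowerSeries R) : PowerSeries R :=
  PowerSeries.mk fun n => ∑ k ∈ Finset.range (n + 1), (coeff k g) * (coeff n (f ^ k))

/-- The formal exponential `exp f` of a power series `f` with zero constant term,
over a `ℚ`-algebra. -/
def PowerSeries.expAt {R : Type*} [CommRing R] [Algebra ℚ R] (f : PowerSeries R) :
    PowerSeries R :=
  f.substInto (PowerSeries.exp R)

/-!
Write `A = ∑_{k ≥ 1} [x^k] f^k z^k / k` and `B = ∑_n b_n z^n`, `b_n = [x^n] f^{n+1} / (n+1)`.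
Both `exp A` and `B` have constant coefficient `1`, and `exp A` solves `Y' = Y A'`, whose
solutions are determined by their constant coefficient; so it suffices that `B' = B A'`.
As `1 + z A' = ∑ [x^k] f^k z^k` and `(z B)' = ∑ [x^n] f^{n+1} z^n`, this is the convolution
identity `[x^N] f^{N+1} = ∑_{j ≤ N} b_j [x^{N-j}] f^{N-j}`, a form of Lagrange inversion.

To prove it, expand `f ≡ ∑_{j ≤ N} c_j u^j (mod x^{N+1})` in powers of `u = x / f`. Since
`f^N u^j = x^j f^{N-j}`, multiplying by `f^N` gives `[x^N] f^{N+1} = ∑_j c_j [x^{N-j}] f^{N-j}`.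
The functionals `h ↦ [x^j] (f^{j+1} u' h)` are dual to the `u^i`: with `f^2 u' = f - x f'`,
the off-diagonal values are `[x^{e+1}] f^e (f - x f') = 0`, because `(e+1) f^e f' = (f^{e+1})'`.
Applying them to `f` gives `c_j = [x^j] f^j (f - x f') = b_j`, by the same derivative identity.
-/

theorem inv_smul_mul_natCast {R : Type*} [CommSemiring R] [Module ℚ R] {m : ℕ} (hm : m ≠ 0)
    (x : R) : ((m : ℚ)⁻¹ • x) * m = x := by
  rw [mul_comm, ← nsmul_eq_mul, ← Nat.cast_smul_eq_nsmul ℚ, smul_inv_smul₀ (by exact_mod_cast hm)]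

namespace PowerSeries

variable {R : Type*} [CommRing R]

theorem substInto_eq_subst {f : R⟦X⟧} (hf : constantCoeff f = 0) (g : R⟦X⟧) :
    f.substInto g = g.subst f := by
  ext n
  rw [substInto, coeff_mk, coeff_subst' (HasSubst.of_constantCoeff_zero' hf)]
  refine (finsum_eq_sum_of_support_subset _ fun d hd => ?_).symm
  by_contra hdn
  have hnd : (n : ℕ∞) < d := Nat.cast_lt.mpr (by simpa using hdn)
  exact hd (by
    simp only [coeff_of_lt_order n (hnd.trans_le (le_order_pow_of_constantCoeff_eq_zero d hf)),
      mul_zero])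

theorem derivative_expAt [Algebra ℚ R] {f : R⟦X⟧} (hf : constantCoeff f = 0) :
    d⁄dX R (expAt f) = expAt f * d⁄dX R f := by
  rw [expAt, substInto_eq_subst hf, derivative_subst (HasSubst.of_constantCoeff_zero' hf),
    derivative_exp]

theorem constantCoeff_expAt [Algebra ℚ R] (f : R⟦X⟧) : constantCoeff (expAt f) = 1 := by
  rw [← coeff_zero_eq_constantCoeff_apply, expAt, substInto, coeff_mk]
  simp

theorem eq_of_derivative_eq_mul [IsAddTorsionFree R] {Y Z D : R⟦X⟧}
    (hY : d⁄dX R Y = Y * D) (hZ : d⁄dX R Z = Z * D) (h0 : constantCoeff Y = constantCoeff Z) :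
    Y = Z := by
  rw [← sub_eq_zero]
  have hW : d⁄dX R (Y - Z) = (Y - Z) * D := by rw [map_sub, hY, hZ, sub_mul]
  ext n
  induction n using Nat.strong_induction_on with
  | _ n ih =>
    rcases n with _ | n
    · simp [h0]
    · have h := congrArg (coeff n) hW
      rw [coeff_derivative, coeff_mul, sum_eq_zero fun p hp => by
        rw [ih p.1 (by have := mem_antidiagonal.mp hp; omega), map_zero, zero_mul]] at h
      have hsmul : (n + 1) • coeff (n + 1) (Y - Z) = 0 := by
        rw [nsmul_eq_mul, mul_comm]; exact_mod_cast h
      rw [map_zero]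
      exact (smul_eq_zero.mp hsmul).resolve_left n.succ_ne_zero

theorem coeff_pow_mul_sub_X_mul_derivative (f : R⟦X⟧) (n m : ℕ) :
    (n + 1 : R) * coeff m (f ^ n * (f - X * d⁄dX R f)) =
      (n + 1 - m : R) * coeff m (f ^ (n + 1)) := by
  have hsplit : f ^ n * (f - X * d⁄dX R f) = f ^ (n + 1) - X * (f ^ n * d⁄dX R f) := by ring
  rcases m with _ | m
  · simp [hsplit]
  · have hD := congrArg (coeff m) (derivative_pow f (n + 1))
    rw [coeff_derivative, mul_assoc, ← map_natCast (C (R := R)), coeff_C_mul] at hD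
    rw [hsplit, map_sub, coeff_succ_X_mul]
    push_cast at hD ⊢
    linear_combination hD

theorem sq_mul_derivative_X_mul {f g : R⟦X⟧} (hfg : f * g = 1) :
    f ^ 2 * d⁄dX R (X * g) = f - X * d⁄dX R f := by
  have h := congrArg (d⁄dX R) hfg
  rw [Derivation.leibniz, Derivation.map_one_eq_zero, smul_eq_mul, smul_eq_mul] at h
  rw [Derivation.leibniz, derivative_X, smul_eq_mul, smul_eq_mul]
  linear_combination (X * f) * h + (f - X * d⁄dX R f) * hfg

theorem coeff_pow_mul_derivative_mul_pow [IsAddTorsionFree R] {f g : R⟦X⟧} (hfg : f * g = 1)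
    (i j : ℕ) :
    coeff j (f ^ (j + 1) * d⁄dX R (X * g) * (X * g) ^ i) = if i = j then 1 else 0 := by
  rcases lt_trichotomy i j with hij | rfl | hji
  · obtain ⟨e, rfl⟩ := Nat.exists_eq_add_of_lt hij
    have hq : f ^ (i + e + 1 + 1) * d⁄dX R (X * g) * (X * g) ^ i =
        X ^ i * (f ^ e * (f - X * d⁄dX R f)) := by
      have hpow : (f * g) ^ i = 1 := by rw [hfg, one_pow]
      rw [← sq_mul_derivative_X_mul hfg]
      linear_combination (X ^ i * f ^ (e + 2) * d⁄dX R (X * g)) * hpow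
    have hvanish : (e + 1) • coeff (e + 1) (f ^ e * (f - X * d⁄dX R f)) = 0 := by
      have h := coeff_pow_mul_sub_X_mul_derivative f e (e + 1)
      rw [nsmul_eq_mul]; push_cast at h ⊢; simpa using h
    rw [if_neg hij.ne, hq, show i + e + 1 = e + 1 + i by ring, coeff_X_pow_mul,
      (smul_eq_zero.mp hvanish).resolve_left e.succ_ne_zero]
  · have hpow : (f * g) ^ i = 1 := by rw [hfg, one_pow]
    have hdiag : f ^ (i + 1) * d⁄dX R (X * g) * (X * g) ^ i =
        X ^ i * (f * d⁄dX R (X * g)) := by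
      linear_combination (X ^ i * f * d⁄dX R (X * g)) * hpow
    have hconst : constantCoeff (f * d⁄dX R (X * g)) = 1 := by
      simpa [Derivation.leibniz] using congrArg constantCoeff hfg
    rw [if_pos rfl, hdiag, coeff_X_pow_mul', if_pos le_rfl, Nat.sub_self,
      coeff_zero_eq_constantCoeff_apply, hconst]
  · rw [if_neg hji.ne', mul_pow, mul_comm (X ^ i), ← mul_assoc, coeff_mul_X_pow',
      if_neg (by omega)]

theorem exists_X_pow_dvd_sub_sum_smul_pow {g : R⟦X⟧} (hg : IsUnit (constantCoeff g))
    (h : R⟦X⟧) (N : ℕ) :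
    ∃ c : ℕ → R, X ^ (N + 1) ∣ h - ∑ j ∈ range (N + 1), c j • (X * g) ^ j := by
  induction N with
  | zero => exact ⟨fun _ => constantCoeff h, by simp [X_dvd_iff]⟩
  | succ N ih =>
    obtain ⟨c, t, ht⟩ := ih
    obtain ⟨v, hv⟩ := hg
    set a := constantCoeff t * ↑(v⁻¹ ^ (N + 1))
    refine ⟨Function.update c (N + 1) a, ?_⟩
    have hrest : ∑ j ∈ range (N + 1), Function.update c (N + 1) a j • (X * g) ^ j =
        ∑ j ∈ range (N + 1), c j • (X * g) ^ j :=
      sum_congr rfl fun j hj => by rw [Function.update_of_ne (by simp at hj; omega)]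
    rw [sum_range_succ, hrest, Function.update_self, ← sub_sub, ht, mul_pow, smul_eq_C_mul,
      ← mul_assoc, mul_comm (C a), mul_assoc, ← mul_sub, pow_succ X]
    refine mul_dvd_mul_left _ (X_dvd_iff.mpr ?_)
    simp [a, ← hv, mul_assoc, ← mul_pow]

theorem coeff_pow_mul_derivative_mul_eq_of_X_pow_dvd [IsAddTorsionFree R] {f g h : R⟦X⟧}
    (hfg : f * g = 1) {N : ℕ} {c : ℕ → R}
    (hc : X ^ (N + 1) ∣ h - ∑ i ∈ range (N + 1), c i • (X * g) ^ i) {j : ℕ} (hj : j ≤ N) :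
    coeff j (f ^ (j + 1) * d⁄dX R (X * g) * h) = c j := by
  obtain ⟨t, ht⟩ := hc
  rw [sub_eq_iff_eq_add'.mp ht, mul_add, map_add, mul_sum, map_sum]
  simp_rw [mul_smul_comm, LinearMap.map_smul_of_tower, coeff_pow_mul_derivative_mul_pow hfg]
  rw [mul_left_comm, coeff_X_pow_mul', if_neg (by omega), add_zero]
  simp [hj]

theorem coeff_pow_succ_eq_sum [IsAddTorsionFree R] {f : R⟦X⟧} (hf : IsUnit f) (N : ℕ) :
    coeff N (f ^ (N + 1)) = ∑ j ∈ range (N + 1),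
      coeff j (f ^ j * (f - X * d⁄dX R f)) * coeff (N - j) (f ^ (N - j)) := by
  obtain ⟨g, hfg⟩ := hf.exists_right_inv
  have hg : IsUnit (constantCoeff g) :=
    .of_mul_eq_one_right (constantCoeff f) (by rw [← map_mul, hfg, map_one])
  obtain ⟨c, hc⟩ := exists_X_pow_dvd_sub_sum_smul_pow hg f N
  have hcoeff : ∀ j ∈ range (N + 1), coeff j (f ^ j * (f - X * d⁄dX R f)) = c j := by
    intro j hj
    rw [← coeff_pow_mul_derivative_mul_eq_of_X_pow_dvd hfg hc
      (by simpa [Nat.lt_succ_iff] using hj), ← sq_mul_derivative_X_mul hfg]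
    ring_nf
  have hshift : ∀ j ∈ range (N + 1),
      coeff N (f ^ N * (X * g) ^ j) = coeff (N - j) (f ^ (N - j)) := by
    intro j hj
    obtain ⟨k, rfl⟩ := Nat.exists_eq_add_of_le' (Nat.lt_succ_iff.mp (mem_range.mp hj))
    have hpow : (f * g) ^ j = 1 := by rw [hfg, one_pow]
    have hXk : f ^ (k + j) * (X * g) ^ j = X ^ j * f ^ k := by
      linear_combination (X ^ j * f ^ k) * hpow
    rw [hXk, coeff_X_pow_mul, Nat.add_sub_cancel]
  obtain ⟨t, ht⟩ := hc
  calc coeff N (f ^ (N + 1))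
      = coeff N (f ^ N * ∑ j ∈ range (N + 1), c j • (X * g) ^ j) +
          coeff N (X ^ (N + 1) * (f ^ N * t)) := by
        rw [← map_add, ← mul_left_comm, ← mul_add, ← ht, add_sub_cancel, pow_succ]
    _ = _ := by
        rw [coeff_X_pow_mul', if_neg (by omega), add_zero, mul_sum, map_sum]
        refine sum_congr rfl fun j hj => ?_
        rw [mul_smul_comm, LinearMap.map_smul_of_tower, hshift j hj, hcoeff j hj, smul_eq_mul]

section RatAlgebra

variable [Algebra ℚ R]

theorem coeff_pow_mul_sub_X_mul_derivative_self (f : R⟦X⟧) (n : ℕ) :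
    coeff n (f ^ n * (f - X * d⁄dX R f)) = ((n + 1 : ℕ) : ℚ)⁻¹ • coeff n (f ^ (n + 1)) := by
  have h := coeff_pow_mul_sub_X_mul_derivative f n n
  rw [add_sub_cancel_left, one_mul, ← Nat.cast_succ, ← nsmul_eq_mul,
    ← Nat.cast_smul_eq_nsmul ℚ] at h
  rw [← h, inv_smul_smul₀ (by positivity)]

theorem derivative_mk_inv_smul_coeff_pow_succ {f : R⟦X⟧} (hf : IsUnit f) :
    d⁄dX R (mk fun n => ((n + 1 : ℕ) : ℚ)⁻¹ • coeff n (f ^ (n + 1))) =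
      (mk fun n => ((n + 1 : ℕ) : ℚ)⁻¹ • coeff n (f ^ (n + 1))) *
        d⁄dX R (mk fun k => if k = 0 then 0 else (k : ℚ)⁻¹ • coeff k (f ^ k)) := by
  have := IsAddTorsionFree.of_module_rat R
  set B : R⟦X⟧ := mk fun n => ((n + 1 : ℕ) : ℚ)⁻¹ • coeff n (f ^ (n + 1))
  set A : R⟦X⟧ := mk fun k => if k = 0 then 0 else (k : ℚ)⁻¹ • coeff k (f ^ k)
  have hdiag : mk (fun k => coeff k (f ^ k)) = 1 + X * d⁄dX R A := by
    ext (_ | k)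
    · simp
    · rw [coeff_mk, map_add, coeff_succ_X_mul, coeff_derivative, coeff_mk, if_neg k.succ_ne_zero,
        ← Nat.cast_succ, inv_smul_mul_natCast k.succ_ne_zero, coeff_one, if_neg k.succ_ne_zero,
        zero_add]
  have hXB : d⁄dX R (X * B) = mk fun n => coeff n (f ^ (n + 1)) := by
    ext n
    rw [coeff_derivative, coeff_succ_X_mul, coeff_mk, coeff_mk, ← Nat.cast_succ,
      inv_smul_mul_natCast n.succ_ne_zero]
  have hlagrange : B * mk (fun k => coeff k (f ^ k)) = mk fun n => coeff n (f ^ (n + 1)) := by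
    ext N
    rw [coeff_mul, Nat.sum_antidiagonal_eq_sum_range_succ_mk, coeff_mk, coeff_pow_succ_eq_sum hf]
    refine sum_congr rfl fun j _ => ?_
    rw [coeff_mk, coeff_mk, coeff_pow_mul_sub_X_mul_derivative_self]
  apply X_mul_cancel
  have h := hXB.trans hlagrange.symm
  rw [hdiag, Derivation.leibniz, derivative_X, smul_eq_mul, smul_eq_mul] at h
  linear_combination h

end RatAlgebra

end PowerSeries

/-- **Lemma 8.3**: for a formal power series `f` over a commutative `ℚ`-algebra `R` with
constant coefficient `1`, one has
`exp( ∑_{k ≥ 1} (1/k)·([x^k] f^k)·z^k ) = ∑_{k ≥ 1} (1/k)·([x^{k-1}] f^k)·z^{k-1}`. -/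
theorem exp_sum_coeff_pow_eq_sum_coeff_pow
    (R : Type*) [CommRing R] [Algebra ℚ R]
    (f : PowerSeries R) (hf : PowerSeries.constantCoeff f = 1) :
    PowerSeries.expAt
        (PowerSeries.mk fun k => if k = 0 then 0 else ((k : ℚ))⁻¹ • coeff k (f ^ k)) =
      PowerSeries.mk fun n => (((n + 1 : ℕ) : ℚ))⁻¹ • coeff n (f ^ (n + 1)) := by
  have := IsAddTorsionFree.of_module_rat R
  have hA :
      constantCoeff (mk fun k => if k = 0 then 0 else ((k : ℚ))⁻¹ • coeff k (f ^ k)) = 0 := by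
    rw [← coeff_zero_eq_constantCoeff_apply, coeff_mk, if_pos rfl]
  have hunit : IsUnit f := isUnit_iff_constantCoeff.mpr (hf ▸ isUnit_one)
  refine eq_of_derivative_eq_mul (derivative_expAt hA)
    (derivative_mk_inv_smul_coeff_pow_succ hunit) ?_
  rw [constantCoeff_expAt, ← coeff_zero_eq_constantCoeff_apply, coeff_mk]
  simp [hf]
end
end

section
/- Let f be a formal Laurent series over ℂ of the form f = y^{−1} + ∑_{k≥0} f_k y^k (i.e. the coefficient of y^n vanishes for n < −1 and the coefficient of y^{−1} equals 1). Then the following identity of formal power series in t holds: t · exp( ∑_{k≥1} (1/k)·(coefficient of y^0 in f^k)·t^k ) = ∑_{k≥1} (1/k)·(coefficient of y^{−1} in f^k)·t^k. -/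
/-!
Write `f = y⁻¹ g` with `g(0) = 1`, so that `[y^0] f^k = [t^k] g^k` and
`[y^{-1}] f^k = [t^{k-1}] g^k`. Let `w` solve `w = t g(w)`. Lagrange inversion identifies the
right-hand side with `w`, and the residue form of the Lagrange–Bürmann formula gives
`w' / g(w) = ∑ [t^n] g^n t^n`. Since `w' = g(w) + t g(w)'`, the logarithmic derivative of `g(w)`
is then the derivative of `A = ∑_{k ≥ 1} (1/k) [t^k] g^k t^k`, so `g(w) = exp A` and
`t exp A = w`.
-/

open PowerSeries Finset

noncomputable section

namespace PowerSeries

section Subst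

variable {R : Type*} [CommRing R] {w : R⟦X⟧}

theorem X_pow_dvd_subst_sub_sum (hw : constantCoeff w = 0) (H : R⟦X⟧) (N : ℕ) :
    X ^ (N + 1) ∣ H.subst w - ∑ m ∈ range (N + 1), coeff m H • w ^ m := by
  have hsub := HasSubst.of_constantCoeff_zero' hw
  obtain ⟨Q, hQ⟩ : X ^ (N + 1) ∣ H - (trunc (N + 1) H : R⟦X⟧) :=
    X_pow_dvd_iff.mpr fun m hm => by simp [coeff_trunc, hm]
  have htrunc : (trunc (N + 1) H : R⟦X⟧).subst w = ∑ m ∈ range (N + 1), coeff m H • w ^ m := by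
    rw [subst_coe hsub, Polynomial.aeval_eq_sum_range' (natDegree_trunc_lt H N)]
    refine sum_congr rfl fun m hm => ?_
    rw [coeff_trunc, if_pos (mem_range.mp hm)]
  have hdiff : H.subst w - (trunc (N + 1) H : R⟦X⟧).subst w = w ^ (N + 1) * Q.subst w := by
    rw [← subst_sub hsub, hQ, subst_mul hsub, subst_pow hsub, subst_X hsub]
  rw [← htrunc, hdiff]
  exact dvd_mul_of_dvd_left (pow_dvd_pow_of_dvd (X_dvd_iff.mpr hw) _) _

theorem coeff_coe_trunc_succ_pow (f : R⟦X⟧) (n k : ℕ) :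
    coeff n ((trunc (n + 1) f : R⟦X⟧) ^ k) = coeff n (f ^ k) := by
  have := congrArg (Polynomial.coeff · n) (trunc_trunc_pow f (n + 1) k)
  simpa only [coeff_trunc, if_pos (Nat.lt_succ_self n)] using this

theorem coeff_subst_mul (hw : constantCoeff w = 0) (H P : R⟦X⟧) (N : ℕ) :
    coeff N (H.subst w * P) = ∑ m ∈ range (N + 1), coeff m H * coeff N (w ^ m * P) := by
  obtain ⟨Q, hQ⟩ := X_pow_dvd_subst_sub_sum hw H N
  rw [← sub_add_cancel (H.subst w) (∑ m ∈ range (N + 1), coeff m H • w ^ m), hQ, add_mul,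
    map_add, mul_assoc, coeff_X_pow_mul', if_neg (by omega), zero_add, sum_mul, map_sum]
  simp only [smul_mul_assoc, coeff_smul, smul_eq_mul]

theorem coeff_subst_eq_sum (hw : constantCoeff w = 0) (H : R⟦X⟧) (N : ℕ) :
    coeff N (H.subst w) = ∑ m ∈ range (N + 1), coeff m H * coeff N (w ^ m) := by
  simpa using coeff_subst_mul hw H 1 N

theorem constantCoeff_subst_of_constantCoeff_eq_zero (hw : constantCoeff w = 0) (H : R⟦X⟧) :
    constantCoeff (H.subst w) = constantCoeff H := by
  simpa using coeff_subst_eq_sum hw H 0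

theorem substInto_eq_subst_s2 (hw : constantCoeff w = 0) (H : R⟦X⟧) : w.substInto H = H.subst w := by
  ext N
  rw [substInto, coeff_mk, coeff_subst_eq_sum hw]

variable [Algebra ℚ R]

theorem expAt_eq_subst (hw : constantCoeff w = 0) : w.expAt = (exp R).subst w :=
  substInto_eq_subst_s2 hw _

theorem constantCoeff_expAt_s2 (hw : constantCoeff w = 0) : constantCoeff w.expAt = 1 := by
  rw [expAt_eq_subst hw, constantCoeff_subst_of_constantCoeff_eq_zero hw, constantCoeff_exp]

theorem derivative_expAt_s2 (hw : constantCoeff w = 0) : d⁄dX R w.expAt = w.expAt * d⁄dX R w := by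
  rw [expAt_eq_subst hw, derivative_subst (HasSubst.of_constantCoeff_zero' hw), derivative_exp]

end Subst

section LagrangeRoot

variable {R : Type*} [CommRing R]

/-- The coefficients of the solution of `w = X * g(w)`. Coefficient `n + 1` only needs the
truncation of `w` to degrees `≤ n`, which makes the recursion well founded. -/
def lagrangeRootCoeff (g : R⟦X⟧) : ℕ → R
  | 0 => 0
  | n + 1 => ∑ k ∈ range (n + 1), coeff k g *
      coeff n ((mk fun i => if _ : i ≤ n then lagrangeRootCoeff g i else 0) ^ k)

def lagrangeRoot (g : R⟦X⟧) : R⟦X⟧ := mk (lagrangeRootCoeff g)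

variable (g : R⟦X⟧)

theorem constantCoeff_lagrangeRoot : constantCoeff (lagrangeRoot g) = 0 := by
  rw [← coeff_zero_eq_constantCoeff_apply, lagrangeRoot, coeff_mk, lagrangeRootCoeff]

theorem lagrangeRoot_eq_X_mul_subst : lagrangeRoot g = X * g.subst (lagrangeRoot g) := by
  ext n
  cases n with
  | zero => simp [coeff_zero_eq_constantCoeff_apply, constantCoeff_lagrangeRoot]
  | succ n =>
    have htrunc : (mk fun i => if _ : i ≤ n then lagrangeRootCoeff g i else 0) =
        (trunc (n + 1) (lagrangeRoot g) : R⟦X⟧) := by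
      ext i
      simp [coeff_trunc, lagrangeRoot]
    rw [coeff_succ_X_mul, coeff_subst_eq_sum (constantCoeff_lagrangeRoot g), lagrangeRoot,
      coeff_mk, lagrangeRootCoeff, htrunc]
    refine sum_congr rfl fun k _ => ?_
    rw [coeff_coe_trunc_succ_pow, lagrangeRoot]

end LagrangeRoot

section Residue

variable {R : Type*} [CommRing R] [IsAddTorsionFree R] {w v : R⟦X⟧}

/-- Since `v = X / w`, `v ^ (j + 1) * w'` is `X ^ (j + 1)` times the derivative of
`w ^ (-j) / (-j)`, whose coefficient of `X ^ (-1)` vanishes. -/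
theorem coeff_pow_succ_mul_derivative_eq_zero (hwv : w * v = X) {j : ℕ} (hj : j ≠ 0) :
    coeff j (v ^ (j + 1) * d⁄dX R w) = 0 := by
  obtain ⟨i, rfl⟩ := Nat.exists_eq_succ_of_ne_zero hj
  have hd : v * d⁄dX R w + w * d⁄dX R v = 1 := by
    have := congrArg (d⁄dX R) hwv
    rw [Derivation.leibniz, derivative_X, smul_eq_mul, smul_eq_mul] at this
    linear_combination this
  have key : (i + 1 : ℕ) • (v ^ (i + 2) * d⁄dX R w) =
      (i + 1 : ℕ) • v ^ (i + 1) - X * d⁄dX R (v ^ (i + 1)) := by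
    rw [derivative_pow, nsmul_eq_mul, nsmul_eq_mul]
    push_cast
    linear_combination
      ((i + 1 : R⟦X⟧) * v ^ (i + 1)) * hd - ((i + 1 : R⟦X⟧) * v ^ i * d⁄dX R v) * hwv
  have hcoeff := congrArg (coeff (i + 1)) key
  rw [map_nsmul, map_sub, map_nsmul, coeff_succ_X_mul, coeff_derivative] at hcoeff
  refine (nsmul_eq_zero_iff_right (Nat.succ_ne_zero i)).mp ?_
  rw [hcoeff, nsmul_eq_mul]
  push_cast
  ring

theorem coeff_pow_mul_pow_succ_mul_derivative (hwv : w * v = X) {m N : ℕ} (hmN : m ≤ N) :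
    coeff N (w ^ m * (v ^ (N + 1) * d⁄dX R w)) =
      if m = N then coeff 0 (v * d⁄dX R w) else 0 := by
  have hsplit : w ^ m * (v ^ (N + 1) * d⁄dX R w) = X ^ m * (v ^ (N - m + 1) * d⁄dX R w) := by
    rw [← hwv, mul_pow, show N + 1 = m + (N - m + 1) by omega, pow_add]
    ring
  rw [hsplit, coeff_X_pow_mul', if_pos hmN]
  split_ifs with h
  · simp [h]
  · exact coeff_pow_succ_mul_derivative_eq_zero hwv (by omega)

/-- The Lagrange–Bürmann formula in residue form: `[X ^ N] H = res (H(w) / w ^ (N + 1) · w')`. -/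
theorem coeff_subst_mul_pow_succ_mul_derivative (hw : constantCoeff w = 0) (hwv : w * v = X)
    (hv : coeff 0 (v * d⁄dX R w) = 1) (H : R⟦X⟧) (N : ℕ) :
    coeff N (H.subst w * (v ^ (N + 1) * d⁄dX R w)) = coeff N H := by
  rw [coeff_subst_mul hw, sum_eq_single N]
  · rw [coeff_pow_mul_pow_succ_mul_derivative hwv le_rfl, if_pos rfl, hv, mul_one]
  · intro m hm hmN
    rw [coeff_pow_mul_pow_succ_mul_derivative hwv (Nat.lt_succ_iff.mp (mem_range.mp hm)),
      if_neg hmN, mul_zero]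
  · exact fun h => absurd (mem_range.mpr N.lt_succ_self) h

end Residue

section LagrangeInversion

variable {K : Type*} [Field K] {g : K⟦X⟧}

theorem constantCoeff_subst_lagrangeRoot (hg : constantCoeff g = 1) :
    constantCoeff (g.subst (lagrangeRoot g)) = 1 := by
  rw [constantCoeff_subst_of_constantCoeff_eq_zero (constantCoeff_lagrangeRoot g), hg]

theorem subst_lagrangeRoot_mul_inv (hg : constantCoeff g = 1) :
    g.subst (lagrangeRoot g) * (g.subst (lagrangeRoot g))⁻¹ = 1 :=
  PowerSeries.mul_inv_cancel _ (by simp [constantCoeff_subst_lagrangeRoot hg])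

theorem lagrangeRoot_mul_inv_subst (hg : constantCoeff g = 1) :
    lagrangeRoot g * (g.subst (lagrangeRoot g))⁻¹ = X := by
  nth_rewrite 1 [lagrangeRoot_eq_X_mul_subst g]
  rw [mul_assoc, subst_lagrangeRoot_mul_inv hg, mul_one]

theorem coeff_zero_inv_subst_mul_derivative_lagrangeRoot (hg : constantCoeff g = 1) :
    coeff 0 ((g.subst (lagrangeRoot g))⁻¹ * d⁄dX K (lagrangeRoot g)) = 1 := by
  have hw1 : coeff 1 (lagrangeRoot g) = 1 := by
    nth_rewrite 1 [lagrangeRoot_eq_X_mul_subst g]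
    rw [coeff_succ_X_mul, coeff_zero_eq_constantCoeff_apply, constantCoeff_subst_lagrangeRoot hg]
  rw [coeff_zero_eq_constantCoeff_apply, map_mul, constantCoeff_inv,
    constantCoeff_subst_lagrangeRoot hg, ← coeff_zero_eq_constantCoeff_apply, coeff_derivative, hw1]
  norm_num

variable [CharZero K]

theorem coeff_subst_lagrangeRoot_mul_inv_pow (hg : constantCoeff g = 1) (H : K⟦X⟧) (N : ℕ) :
    coeff N (H.subst (lagrangeRoot g) *
      ((g.subst (lagrangeRoot g))⁻¹ ^ (N + 1) * d⁄dX K (lagrangeRoot g))) = coeff N H :=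
  coeff_subst_mul_pow_succ_mul_derivative (constantCoeff_lagrangeRoot g)
    (lagrangeRoot_mul_inv_subst hg) (coeff_zero_inv_subst_mul_derivative_lagrangeRoot hg) H N

theorem coeff_derivative_lagrangeRoot (hg : constantCoeff g = 1) (n : ℕ) :
    coeff n (d⁄dX K (lagrangeRoot g)) = coeff n (g ^ (n + 1)) := by
  have h := coeff_subst_lagrangeRoot_mul_inv_pow hg (g ^ (n + 1)) n
  rwa [subst_pow (HasSubst.of_constantCoeff_zero' (constantCoeff_lagrangeRoot g)), ← mul_assoc,
    ← mul_pow, subst_lagrangeRoot_mul_inv hg, one_pow, one_mul] at h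

theorem lagrangeRoot_eq_mk (hg : constantCoeff g = 1) :
    lagrangeRoot g = mk fun k => if k = 0 then 0 else (k : K)⁻¹ * coeff (k - 1) (g ^ k) := by
  ext k
  cases k with
  | zero => simp [coeff_zero_eq_constantCoeff_apply, constantCoeff_lagrangeRoot]
  | succ n =>
    have h := coeff_derivative_lagrangeRoot hg n
    rw [coeff_derivative] at h
    rw [coeff_mk, if_neg n.succ_ne_zero, Nat.add_sub_cancel, ← h]
    push_cast
    field_simp

theorem inv_subst_mul_derivative_lagrangeRoot (hg : constantCoeff g = 1) :
    (g.subst (lagrangeRoot g))⁻¹ * d⁄dX K (lagrangeRoot g) = mk fun n => coeff n (g ^ n) := by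
  ext n
  rw [coeff_mk, ← coeff_subst_lagrangeRoot_mul_inv_pow hg (g ^ n) n,
    subst_pow (HasSubst.of_constantCoeff_zero' (constantCoeff_lagrangeRoot g)), pow_succ]
  rw [show ∀ u v w : K⟦X⟧, u ^ n * (v ^ n * v * w) = (u * v) ^ n * (v * w) by intros; ring,
    subst_lagrangeRoot_mul_inv hg, one_pow, one_mul]

end LagrangeInversion

section Exponential

variable {K : Type*} [Field K] [CharZero K]

theorem X_mul_derivative_mk_inv_mul (a : ℕ → K) :
    X * d⁄dX K (mk fun k => if k = 0 then 0 else (k : K)⁻¹ * a k) = mk a - C (a 0) := by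
  ext n
  cases n with
  | zero => simp
  | succ n =>
    rw [coeff_succ_X_mul, coeff_derivative, coeff_mk, if_neg n.succ_ne_zero, map_sub, coeff_mk,
      coeff_C, if_neg n.succ_ne_zero, sub_zero]
    push_cast
    field_simp

theorem eq_of_derivative_eq_mul_s2 {y z a : K⟦X⟧} (hy : d⁄dX K y = y * a) (hz : d⁄dX K z = z * a)
    (hz0 : constantCoeff z ≠ 0) (hyz : constantCoeff y = constantCoeff z) : y = z := by
  have hzz : z⁻¹ * z = 1 := PowerSeries.inv_mul_cancel z hz0
  have hquot : y * z⁻¹ = 1 := by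
    refine derivative.ext ?_ ?_
    · rw [Derivation.leibniz, derivative_inv', hy, hz, Derivation.map_one_eq_zero, smul_eq_mul,
        smul_eq_mul]
      linear_combination (-(y * z⁻¹ * a)) * hzz
    · rw [map_mul, constantCoeff_inv, hyz, map_one, mul_inv_cancel₀ hz0]
  calc y = y * z⁻¹ * z := by rw [mul_assoc, hzz, mul_one]
    _ = z := by rw [hquot, one_mul]

variable {g : K⟦X⟧}

theorem derivative_subst_lagrangeRoot (hg : constantCoeff g = 1) :
    d⁄dX K (g.subst (lagrangeRoot g)) = g.subst (lagrangeRoot g) *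
      d⁄dX K (mk fun k => if k = 0 then 0 else (k : K)⁻¹ * coeff k (g ^ k)) := by
  have hC := X_mul_derivative_mk_inv_mul fun k => coeff k (g ^ k)
  rw [pow_zero, coeff_zero_eq_constantCoeff_apply, map_one, map_one,
    ← inv_subst_mul_derivative_lagrangeRoot hg] at hC
  set u := g.subst (lagrangeRoot g)
  have hw' : d⁄dX K (lagrangeRoot g) = u + X * d⁄dX K u := by
    rw [lagrangeRoot_eq_X_mul_subst g, Derivation.leibniz, derivative_X, smul_eq_mul, smul_eq_mul,
      mul_one, add_comm]
  have hu : u * u⁻¹ = 1 := subst_lagrangeRoot_mul_inv hg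
  have hX : X * (u⁻¹ * d⁄dX K u) = X * d⁄dX K
      (mk fun k => if k = 0 then 0 else (k : K)⁻¹ * coeff k (g ^ k)) := by
    rw [hC, hw']
    linear_combination -hu
  rw [← mul_left_cancel₀ X_ne_zero hX]
  linear_combination (-d⁄dX K u) * hu

theorem X_mul_expAt_eq_lagrangeRoot (hg : constantCoeff g = 1) :
    X * expAt (mk fun k => if k = 0 then 0 else (k : K)⁻¹ * coeff k (g ^ k)) = lagrangeRoot g := by
  have hA : constantCoeff (mk fun k => if k = 0 then 0 else (k : K)⁻¹ * coeff k (g ^ k)) = 0 := by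
    simp [← coeff_zero_eq_constantCoeff_apply]
  rw [eq_of_derivative_eq_mul_s2 (derivative_expAt_s2 hA) (derivative_subst_lagrangeRoot hg)
    (by simp [constantCoeff_subst_lagrangeRoot hg])
    (by rw [constantCoeff_expAt_s2 hA, constantCoeff_subst_lagrangeRoot hg]),
    ← lagrangeRoot_eq_X_mul_subst]

end Exponential

end PowerSeries

namespace LaurentSeries

theorem exists_eq_single_neg_one_mul {R : Type*} [Semiring R] [Nontrivial R]
    {f : LaurentSeries R} (hlow : ∀ n : ℤ, n < -1 → f.coeff n = 0) (hres : f.coeff (-1) = 1) :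
    ∃ g : R⟦X⟧, constantCoeff g = 1 ∧ f = HahnSeries.single (-1) 1 * (g : LaurentSeries R) := by
  have hf : f ≠ 0 := by
    rintro rfl
    exact zero_ne_one hres
  have horder : f.order = -1 := by
    refine le_antisymm (HahnSeries.order_le_of_coeff_ne_zero (by simp [hres])) ?_
    by_contra! hlt
    exact hf (HahnSeries.coeff_order_eq_zero.mp (hlow _ hlt))
  refine ⟨f.powerSeriesPart, ?_, ?_⟩
  · rw [← coeff_zero_eq_constantCoeff_apply, powerSeriesPart_coeff, horder]
    simpa using hres
  · rw [← horder]
    exact (single_order_mul_powerSeriesPart f).symm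

theorem coeff_single_neg_one_mul_pow {R : Type*} [CommSemiring R] (g : R⟦X⟧) (k n : ℕ) :
    ((HahnSeries.single (-1 : ℤ) (1 : R) * (g : LaurentSeries R)) ^ k).coeff (n - k : ℤ) =
      coeff n (g ^ k) := by
  rw [mul_pow, HahnSeries.single_pow, one_pow, ← map_pow, sub_eq_add_neg,
    show k • (-1 : ℤ) = -k by simp, HahnSeries.coeff_single_mul_add, one_mul, coeff_coe_powerSeries]

end LaurentSeries

/-- The formal core of Theorem 8.1: for a formal Laurent series
`f = y⁻¹ + ∑_{k ≥ 0} f_k y^k` over `ℂ` (no coefficients below `y⁻¹`, and the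
coefficient of `y⁻¹` is `1`), one has, as formal power series in `t`,
`t · exp( ∑_{k ≥ 1} (1/k)·([y^0] f^k)·t^k ) = ∑_{k ≥ 1} (1/k)·([y^{-1}] f^k)·t^k`. -/
theorem laurent_exp_const_eq_residue
    (f : LaurentSeries ℂ)
    (hlow : ∀ n : ℤ, n < -1 → f.coeff n = 0)
    (hres : f.coeff (-1) = 1) :
    PowerSeries.X *
        PowerSeries.expAt
          (PowerSeries.mk fun k =>
            if k = 0 then 0 else ((k : ℂ))⁻¹ * (f ^ k).coeff 0) =
      PowerSeries.mk fun k =>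
        if k = 0 then 0 else ((k : ℂ))⁻¹ * (f ^ k).coeff (-1) := by
  obtain ⟨g, hg, hfg⟩ := LaurentSeries.exists_eq_single_neg_one_mul hlow hres
  have hconst (k : ℕ) : (f ^ k).coeff 0 = coeff k (g ^ k) := by
    simpa [hfg] using LaurentSeries.coeff_single_neg_one_mul_pow g k k
  have hresidue (k : ℕ) : (f ^ (k + 1)).coeff (-1) = coeff k (g ^ (k + 1)) := by
    simpa [hfg] using LaurentSeries.coeff_single_neg_one_mul_pow g (k + 1) k
  simp_rw [hconst]
  rw [X_mul_expAt_eq_lagrangeRoot hg, lagrangeRoot_eq_mk hg]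
  ext k
  rw [coeff_mk, coeff_mk]
  cases k with
  | zero => rfl
  | succ k => rw [if_neg k.succ_ne_zero, if_neg k.succ_ne_zero, hresidue, Nat.add_sub_cancel]
end
end

section
/- Let R = ℂ[ℤ²] be the ring of complex Laurent polynomials in two variables (the group algebra of ℤ² over ℂ, with monomials x^v for v ∈ ℤ²), and let K be its field of fractions. Let w : ℤ² → ℤ be a group homomorphism and let a ∈ R be a nonzero Laurent polynomial whose support is contained in ker w = {v ∈ ℤ² : w(v) = 0}. Then there exists a field automorphism φ of K such that φ(x^v) = x^v · a^{w(v)} for every v ∈ ℤ², where a^{w(v)} is the (possibly negative) integer power of a computed in K using that a is invertible in K. -/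
noncomputable section

/-- The ring of complex Laurent polynomials in two variables, as the group algebra `ℂ[ℤ²]`. -/
abbrev LaurentℤSq : Type := AddMonoidAlgebra ℂ (ℤ × ℤ)

instance : IsDomain LaurentℤSq := NoZeroDivisors.to_isDomain _

/-- The fraction field of `ℂ[ℤ²]`, i.e. the field of rational functions `ℂ(ℤ²)`. -/
abbrev FracLaurentℤSq : Type := FractionRing LaurentℤSq

/-!
Since `a` is supported on `ker w`, the substitution `x^v ↦ x^v a^{w v}` fixes `a`, so it extends
from `ℂ[ℤ²]` to a ring endomorphism of the localization `ℂ[ℤ²][1/a]`; there the substitution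
along `-w` is its inverse. As `a ≠ 0`, the field `K` is also the fraction field of `ℂ[ℤ²][1/a]`,
and every automorphism of a domain extends to its fraction field.
-/

theorem IsFractionRing.exists_ringEquiv_extend_of_isLocalization
    {R S K : Type*} [CommRing R] [IsDomain R] [CommRing S] [Algebra R S] [Field K] [Algebra R K]
    [IsFractionRing R K] (M : Submonoid R) [IsLocalization M S]
    (ι : S →+* K) (hι : ι.comp (algebraMap R S) = algebraMap R K) (σ : S ≃+* S) :
    ∃ φ : K ≃+* K, ∀ s : S, φ (ι s) = ι (σ s) := by
  let : Algebra S K := ι.toAlgebra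
  have : IsScalarTower R S K := .of_algebraMap_eq' hι.symm
  have : IsFractionRing S K := IsFractionRing.isFractionRing_of_isDomain_of_isLocalization M S K
  exact ⟨IsFractionRing.ringEquivOfRingEquiv σ, IsFractionRing.ringEquivOfRingEquiv_algebraMap σ⟩

theorem map_units_val_zpow {M N F : Type*} [Monoid M] [Monoid N] [FunLike F M N]
    [MonoidHomClass F M N] (f : F) (u : Mˣ) (n : ℤ) :
    f ↑(u ^ n) = ↑(Units.map (f : M →* N) u ^ n) := by
  rw [← map_zpow, Units.coe_map, MonoidHom.coe_coe]

abbrev Localization.Away.unitSelf {R : Type*} [CommSemiring R] (a : R) : (Localization.Away a)ˣ :=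
  (IsLocalization.Away.algebraMap_isUnit a).unit

namespace AddMonoidAlgebra

open Localization.Away (unitSelf)

variable {k G : Type*} [CommSemiring k] [AddCommMonoid G] (a : k[G]) (w : G →+ ℤ)

/-- The substitution `x^v ↦ x^v a^{w v}`, with values in `k[G][1/a]`. -/
def mutationToAway : k[G] →ₐ[k] Localization.Away a :=
  lift k (Localization.Away a) G <|
    (algebraMap k[G] (Localization.Away a)).toMonoidHom.comp (of k G) *
      (Units.coeHom _).comp ((zpowersHom _ (unitSelf a)).comp (AddMonoidHom.toMultiplicative w))

theorem mutationToAway_single (v : G) (c : k) :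
    mutationToAway a w (single v c) = algebraMap k[G] _ (single v c) * ↑(unitSelf a ^ w v) := by
  rw [mutationToAway, lift_single, MonoidHom.mul_apply, ← smul_mul_assoc]
  congr 1
  simp [Algebra.smul_def, IsScalarTower.algebraMap_apply k k[G] (Localization.Away a), ← map_mul]

theorem mutationToAway_of_support {b : k[G]} (hb : ∀ v ∈ b.coeff.support, w v = 0) :
    mutationToAway a w b = algebraMap k[G] _ b := by
  conv_lhs => rw [← b.sum_coeff_single]
  conv_rhs => rw [← b.sum_coeff_single]
  simp only [map_finsuppSum]
  refine Finsupp.sum_congr fun v hv => ?_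
  rw [mutationToAway_single, hb v hv, zpow_zero, Units.val_one, mul_one]

variable {a w}

theorem neg_apply_eq_zero_of_mem_support (ha : ∀ v ∈ a.coeff.support, w v = 0) :
    ∀ v ∈ a.coeff.support, (-w) v = 0 := by
  simpa using ha

variable (ha : ∀ v ∈ a.coeff.support, w v = 0)

variable (a w) in
/-- The mutation `μ_{w,a}` of `k[G][1/a]`. -/
def mutation : Localization.Away a →+* Localization.Away a :=
  IsLocalization.Away.lift a (g := (mutationToAway a w).toRingHom) <| by
    simpa [mutationToAway_of_support a w ha] using IsLocalization.Away.algebraMap_isUnit a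

theorem mutation_algebraMap (b : k[G]) :
    mutation a w ha (algebraMap k[G] _ b) = mutationToAway a w b :=
  IsLocalization.Away.lift_eq a _ b

theorem mutation_algebraMap_single (v : G) (c : k) :
    mutation a w ha (algebraMap k[G] _ (single v c)) =
      algebraMap k[G] _ (single v c) * ↑(unitSelf a ^ w v) := by
  rw [mutation_algebraMap, mutationToAway_single]

theorem mutation_unitSelf_zpow (n : ℤ) :
    mutation a w ha ↑(unitSelf a ^ n) = ↑(unitSelf a ^ n) := by
  have hu : Units.map (mutation a w ha : _ →* _) (unitSelf a) = unitSelf a := by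
    ext
    simp [mutation_algebraMap, mutationToAway_of_support a w ha]
  rw [map_units_val_zpow, hu]

theorem mutation_neg_comp_mutation :
    (mutation a (-w) (neg_apply_eq_zero_of_mem_support ha)).comp (mutation a w ha) =
      RingHom.id _ := by
  have h_single (v : G) (c : k) :
      mutation a (-w) (neg_apply_eq_zero_of_mem_support ha)
          (mutation a w ha (algebraMap k[G] _ (single v c))) =
        algebraMap k[G] _ (single v c) := by
    rw [mutation_algebraMap_single, map_mul, mutation_algebraMap_single, mutation_unitSelf_zpow,
      mul_assoc, ← Units.val_mul, ← zpow_add, AddMonoidHom.neg_apply, neg_add_cancel, zpow_zero,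
      Units.val_one, mul_one]
  exact IsLocalization.ringHom_ext (Submonoid.powers a)
    (ringHom_ext (fun c => h_single 0 c) (fun v => h_single v 1))

def mutationEquiv : Localization.Away a ≃+* Localization.Away a :=
  .ofRingHom (mutation a w ha) (mutation a (-w) (neg_apply_eq_zero_of_mem_support ha))
    (by simpa using mutation_neg_comp_mutation (neg_apply_eq_zero_of_mem_support ha))
    (mutation_neg_comp_mutation ha)

theorem mutationEquiv_apply (x : Localization.Away a) : mutationEquiv ha x = mutation a w ha x :=
  rfl

end AddMonoidAlgebra

open AddMonoidAlgebra in
/-- **Mutations are field automorphisms** (Definition 9.1): given a group homomorphism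
`w : ℤ² → ℤ` and a nonzero Laurent polynomial `a ∈ ℂ[ℤ²]` supported on `ker w`, there is a
field automorphism `φ` of the fraction field `K = Frac(ℂ[ℤ²])` with
`φ(x^v) = x^v · a^{w(v)}` for every `v ∈ ℤ²`. -/
theorem mutation_is_field_automorphism
    (w : ℤ × ℤ →+ ℤ) (a : LaurentℤSq) (ha : a ≠ 0)
    (hsupp : ∀ v ∈ a.coeff.support, w v = 0) :
    ∃ φ : FracLaurentℤSq ≃+* FracLaurentℤSq,
      ∀ v : ℤ × ℤ,
        φ (algebraMap LaurentℤSq FracLaurentℤSq (AddMonoidAlgebra.single v 1)) =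
          algebraMap LaurentℤSq FracLaurentℤSq (AddMonoidAlgebra.single v 1) *
            (algebraMap LaurentℤSq FracLaurentℤSq a) ^ (w v) := by
  have haK : IsUnit (algebraMap LaurentℤSq FracLaurentℤSq a) :=
    ((map_ne_zero_iff _ (IsFractionRing.injective _ _)).mpr ha).isUnit
  set ι := IsLocalization.Away.lift (S := Localization.Away a) a haK
  have hι : ι.comp (algebraMap _ _) = algebraMap _ _ := IsLocalization.Away.lift_comp a haK
  obtain ⟨φ, hφ⟩ := IsFractionRing.exists_ringEquiv_extend_of_isLocalization
    (Submonoid.powers a) ι hι (mutationEquiv hsupp)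
  refine ⟨φ, fun v => ?_⟩
  have hιa : Units.map (ι : _ →* _) (Localization.Away.unitSelf a) = haK.unit := by
    ext; exact IsLocalization.Away.lift_eq a haK a
  rw [← hι, RingHom.comp_apply, hφ, mutationEquiv_apply, mutation_algebraMap_single, map_mul,
    map_units_val_zpow, hιa, Units.val_zpow_eq_zpow_val, IsUnit.unit_spec, hι]
end
end

section
/- Let R = ℂ[ℤ²] be the ring of complex Laurent polynomials in two variables with field of fractions K. Let w : ℤ² → ℤ be a group homomorphism and a ∈ R nonzero with support contained in ker w. For f ∈ R define the mutation μ_{w,a}(f) = ∑_{v ∈ supp f} f_v · x^v · a^{w(v)} ∈ K (a finite sum, with a^{w(v)} computed in K). Suppose f, g ∈ R are Laurent polynomials such that μ_{w,a}(f) = g in K (i.e. f is mutable and g is its mutation). Then for every integer k ≥ 1 the constant terms of the k-th powers agree: const(f^k) = const(g^k). Consequently the classical periods coincide: π_f = π_g. -/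
noncomputable section

/-- The mutation `μ_{w,a}(f) = ∑_{v ∈ supp f} f_v · x^v · a^{w(v)}`, computed in the
fraction field of `ℂ[ℤ²]`. -/
def mutation (w : ℤ × ℤ →+ ℤ) (a : LaurentℤSq) (f : LaurentℤSq) : FracLaurentℤSq :=
  ∑ v ∈ f.coeff.support,
    algebraMap LaurentℤSq FracLaurentℤSq (AddMonoidAlgebra.single v (f.coeff v)) *
      (algebraMap LaurentℤSq FracLaurentℤSq a) ^ (w v)

/-- The classical period `π_f(t) = ∑_{k > 0} const(f^k) t^k` of a Laurent polynomial. -/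
def classicalPeriod (f : LaurentℤSq) : PowerSeries ℂ :=
  PowerSeries.mk fun k => if k = 0 then 0 else (f ^ k).coeff (0 : ℤ × ℤ)

/-! The weight `w` grades `ℂ[ℤ²]`, the element `a` is homogeneous of degree zero, and the mutation
multiplies the degree-`n` component by `aⁿ`. Clearing denominators by a power `aᴺ` turns
`μ(f) = g` into an identity in `ℂ[ℤ²]` whose degree-zero components read `f₀ aᴺ = g₀ aᴺ`, so
`f₀ = g₀` and in particular `f` and `g` have the same constant term. The mutation is a ring
homomorphism, so `μ(fᵏ) = gᵏ` and the same holds for all powers. -/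

open DirectSum

namespace AddMonoidAlgebra

variable {R M ι : Type*} [CommSemiring R] [AddMonoid M] [AddMonoid ι] [DecidableEq ι]

theorem coeff_proj_gradeBy_self (f : M →+ ι) (x : R[M]) (m : M) :
    (GradedRing.proj (gradeBy R f) (f m) x).coeff m = x.coeff m := by
  classical
  conv_rhs => rw [← sum_support_decompose (gradeBy R f) x]
  rw [coeff_sum, Finsupp.finsetSum_apply, Finset.sum_eq_single (f m)]
  · rfl
  · exact fun i _ hi => Finsupp.notMem_support_iff.1 fun hm =>
      hi ((decompose (gradeBy R f) x i).2 m hm).symm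
  · intro h
    rw [DFinsupp.notMem_support_iff.1 h]
    rfl

end AddMonoidAlgebra

section GradedDomain

variable {A K σ : Type*} [CommRing A] [IsDomain A] [Field K] [Algebra A K] [IsFractionRing A K]
  [SetLike σ A] [AddSubgroupClass σ A] (𝒜 : ℤ → σ) [GradedRing 𝒜]

theorem proj_zero_eq_of_sum_mul_zpow_eq {β : Type*} (s : Finset β) (d : β → ℤ) (x : β → A)
    (hx : ∀ b ∈ s, x b ∈ 𝒜 (d b)) {a : A} (ha₀ : a ∈ 𝒜 0) (ha : a ≠ 0) {y : A}
    (h : ∑ b ∈ s, algebraMap A K (x b) * algebraMap A K a ^ d b = algebraMap A K y) :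
    GradedRing.proj 𝒜 0 (∑ b ∈ s, x b) = GradedRing.proj 𝒜 0 y := by
  set N := s.sup fun b => (d b).natAbs
  have hN : ∀ b ∈ s, d b + N = ((d b + N).toNat : ℤ) := fun b hb => by
    have : (d b).natAbs ≤ N := Finset.le_sup (f := fun b => (d b).natAbs) hb
    omega
  have hcleared : ∑ b ∈ s, x b * a ^ (d b + N).toNat = y * a ^ N := by
    apply IsFractionRing.injective A K
    have hιa : algebraMap A K a ≠ 0 := (map_ne_zero_iff _ (IsFractionRing.injective A K)).2 ha
    simp only [map_sum, map_mul, map_pow, ← h, Finset.sum_mul]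
    refine Finset.sum_congr rfl fun b hb => ?_
    rw [mul_assoc, ← zpow_natCast, ← zpow_natCast, ← hN b hb, zpow_add₀ hιa]
  have hpow : ∀ k : ℕ, a ^ k ∈ 𝒜 0 := fun k => by simpa using SetLike.pow_mem_graded k ha₀
  have hproj_mul : ∀ z (k : ℕ), GradedRing.proj 𝒜 0 (z * a ^ k) = GradedRing.proj 𝒜 0 z * a ^ k :=
    fun z k => coe_decompose_mul_of_right_mem_zero 𝒜 (hpow k)
  have hterm : ∀ b ∈ s, GradedRing.proj 𝒜 0 (x b * a ^ (d b + N).toNat)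
      = GradedRing.proj 𝒜 0 (x b) * a ^ N := fun b hb => by
    rw [hproj_mul]
    by_cases hdb : d b = 0
    · rw [hdb, zero_add, Int.toNat_natCast]
    · rw [GradedRing.proj_apply, decompose_of_mem_ne 𝒜 (hx b hb) hdb, zero_mul, zero_mul]
  have hproj := congrArg (GradedRing.proj 𝒜 0) hcleared
  rw [map_sum, Finset.sum_congr rfl hterm, ← Finset.sum_mul, ← map_sum, hproj_mul] at hproj
  exact mul_right_cancel₀ (pow_ne_zero N ha) hproj

end GradedDomain

open AddMonoidAlgebra in
def mutationAlgHom (w : ℤ × ℤ →+ ℤ) (a : LaurentℤSq) (ha : a ≠ 0) :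
    LaurentℤSq →ₐ[ℂ] FracLaurentℤSq :=
  lift ℂ FracLaurentℤSq (ℤ × ℤ)
    (((algebraMap LaurentℤSq FracLaurentℤSq : LaurentℤSq →* FracLaurentℤSq).comp (of ℂ (ℤ × ℤ))) *
      (Units.coeHom _).comp ((zpowersHom _ (Units.mk0 _
        ((map_ne_zero_iff _ (IsFractionRing.injective _ _)).2 ha))).comp
        (AddMonoidHom.toMultiplicative w)))

theorem mutationAlgHom_single (w : ℤ × ℤ →+ ℤ) (a : LaurentℤSq) (ha : a ≠ 0) (v : ℤ × ℤ)
    (c : ℂ) : mutationAlgHom w a ha (AddMonoidAlgebra.single v c)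
      = algebraMap LaurentℤSq FracLaurentℤSq (AddMonoidAlgebra.single v c) *
        algebraMap LaurentℤSq FracLaurentℤSq a ^ w v := by
  simp only [mutationAlgHom, AddMonoidAlgebra.lift_single, MonoidHom.mul_apply,
    MonoidHom.coe_comp, MonoidHom.coe_coe, Function.comp_apply, AddMonoidAlgebra.of_apply,
    toAdd_ofAdd, AddMonoidHom.coe_toMultiplicative, zpowersHom_apply, Units.coeHom_apply,
    Units.val_zpow_eq_zpow_val, Units.val_mk0]
  rw [← smul_mul_assoc, ← algebraMap.coe_smul, AddMonoidAlgebra.smul_single, smul_eq_mul, mul_one]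

theorem mutationAlgHom_apply (w : ℤ × ℤ →+ ℤ) (a : LaurentℤSq) (ha : a ≠ 0) (f : LaurentℤSq) :
    mutationAlgHom w a ha f = mutation w a f := by
  conv_lhs => rw [← AddMonoidAlgebra.sum_coeff_single f]
  simp only [Finsupp.sum, map_sum, mutationAlgHom_single, mutation]

theorem mutation_pow (w : ℤ × ℤ →+ ℤ) (a : LaurentℤSq) (ha : a ≠ 0) (f : LaurentℤSq) (k : ℕ) :
    mutation w a (f ^ k) = mutation w a f ^ k := by
  rw [← mutationAlgHom_apply w a ha, map_pow, mutationAlgHom_apply]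

theorem coeff_zero_eq_of_mutation_eq (w : ℤ × ℤ →+ ℤ) (a : LaurentℤSq) (ha : a ≠ 0)
    (hsupp : ∀ v ∈ a.coeff.support, w v = 0) {p c : LaurentℤSq}
    (h : mutation w a p = algebraMap LaurentℤSq FracLaurentℤSq c) :
    p.coeff 0 = c.coeff 0 := by
  have hproj : GradedRing.proj (AddMonoidAlgebra.gradeBy ℂ w) 0 p
      = GradedRing.proj (AddMonoidAlgebra.gradeBy ℂ w) 0 c := by
    have := proj_zero_eq_of_sum_mul_zpow_eq (AddMonoidAlgebra.gradeBy ℂ w) p.coeff.support w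
      (fun v => AddMonoidAlgebra.single v (p.coeff v))
      (fun v _ => AddMonoidAlgebra.single_mem_gradeBy _ _ _) hsupp ha h
    rwa [← Finsupp.sum, AddMonoidAlgebra.sum_coeff_single] at this
  have hcoeff := AddMonoidAlgebra.coeff_proj_gradeBy_self (R := ℂ) w
  rw [← hcoeff p 0, ← hcoeff c 0, map_zero w, hproj]

/-- **Mutation invariance of the classical period** (Proposition of Section 9): if the
Laurent polynomial `f` is mutable with respect to `(w, a)` — where `w : ℤ² → ℤ` is a group
homomorphism and `a ≠ 0` is supported on `ker w` — with mutation the Laurent polynomial `g`,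
then `const(f^k) = const(g^k)` for all `k ≥ 1`; consequently `π_f = π_g`. -/
theorem classicalPeriod_eq_of_mutation
    (w : ℤ × ℤ →+ ℤ) (a : LaurentℤSq) (ha : a ≠ 0)
    (hsupp : ∀ v ∈ a.coeff.support, w v = 0)
    (f g : LaurentℤSq)
    (hmut : mutation w a f = algebraMap LaurentℤSq FracLaurentℤSq g) :
    (∀ k : ℕ, 1 ≤ k → (f ^ k).coeff (0 : ℤ × ℤ) = (g ^ k).coeff (0 : ℤ × ℤ)) ∧
      classicalPeriod f = classicalPeriod g := by
  have hconst (k : ℕ) : (f ^ k).coeff 0 = (g ^ k).coeff 0 :=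
    coeff_zero_eq_of_mutation_eq w a ha hsupp (by rw [mutation_pow w a ha, hmut, map_pow])
  refine ⟨fun k _ => hconst k, ?_⟩
  ext n
  simp only [classicalPeriod, PowerSeries.coeff_mk, hconst]
end
end

section
/- Let a(z) = ∑_{k≥1} ((3k−1)!/(k!)³) z^k ∈ ℚ⟦z⟧ and let Q(z) = z·exp(3·a(−z)). Let z(Q) ∈ ℚ⟦Q⟧ be the compositional inverse of Q(z), i.e. the unique formal power series with zero constant term satisfying Q(z(Q)) = Q. Then M(Q) := exp(a(−z(Q))) satisfies M(Q) ≡ 1 − 2Q + 5Q² − 32Q³ (mod Q⁴). -/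
open PowerSeries Finset

noncomputable section

/-- The series `a(z) = ∑_{k ≥ 1} ((3k−1)!/(k!)³) z^k ∈ ℚ⟦z⟧`. -/
def aP2 : PowerSeries ℚ :=
  PowerSeries.mk fun k => if k = 0 then 0 else ((3 * k - 1).factorial : ℚ) / ((k.factorial : ℚ)) ^ 3

/-- The closed mirror map of `ℙ²`, `Q(z) = z·exp(3·a(−z))`. -/
def closedMirrorMapP2 : PowerSeries ℚ :=
  PowerSeries.X * PowerSeries.expAt (3 * PowerSeries.rescale (-1 : ℚ) aP2)

/-! Only coefficients up to degree 3 matter, and there composition, exponentiation and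
compositional inversion are given by explicit cubic (Faà di Bruno) formulas. From
`Q(z) = z - 6z² + 63z³ + …` one gets `z(Q) = Q + 6Q² + 9Q³ + …`, hence
`a(−z(Q)) = −2Q + 3Q² − (74/3)Q³ + …`, whose exponential is `1 − 2Q + 5Q² − 32Q³ + …`. -/

namespace PowerSeries

section LowDegree

variable {R : Type*} [CommRing R] {f : PowerSeries R}

theorem coeff_pow_of_constantCoeff_eq_zero_of_lt (hf : constantCoeff f = 0) {n k : ℕ}
    (h : n < k) : coeff n (f ^ k) = 0 := by
  obtain ⟨g, rfl⟩ := X_dvd_iff.mpr hf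
  rw [mul_pow, coeff_X_pow_mul', if_neg (by omega)]

theorem coeff_two_sq (hf : constantCoeff f = 0) : coeff 2 (f ^ 2) = coeff 1 f ^ 2 := by
  rw [sq, coeff_mul, Nat.sum_antidiagonal_eq_sum_range_succ_mk]
  simp [sum_range_succ, hf, sq]

theorem coeff_three_sq (hf : constantCoeff f = 0) :
    coeff 3 (f ^ 2) = 2 * coeff 1 f * coeff 2 f := by
  rw [sq, coeff_mul, Nat.sum_antidiagonal_eq_sum_range_succ_mk]
  simp [sum_range_succ, hf]
  ring

theorem coeff_three_cube (hf : constantCoeff f = 0) : coeff 3 (f ^ 3) = coeff 1 f ^ 3 := by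
  rw [pow_succ, coeff_mul, Nat.sum_antidiagonal_eq_sum_range_succ_mk]
  simp [sum_range_succ, coeff_pow_of_constantCoeff_eq_zero_of_lt hf, coeff_two_sq hf, hf]
  ring

end LowDegree

section Composition

variable {R : Type*} [CommRing R] (f g : PowerSeries R)

theorem coeff_substInto (n : ℕ) :
    coeff n (f.substInto g) = ∑ k ∈ range (n + 1), coeff k g * coeff n (f ^ k) :=
  coeff_mk _ _

theorem constantCoeff_substInto : constantCoeff (f.substInto g) = constantCoeff g := by
  rw [← coeff_zero_eq_constantCoeff_apply, coeff_substInto]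
  simp

theorem coeff_one_substInto : coeff 1 (f.substInto g) = coeff 1 g * coeff 1 f := by
  simp [coeff_substInto, sum_range_succ, coeff_one]

variable {f}

theorem coeff_two_substInto (hf : constantCoeff f = 0) :
    coeff 2 (f.substInto g) = coeff 1 g * coeff 2 f + coeff 2 g * coeff 1 f ^ 2 := by
  simp [coeff_substInto, sum_range_succ, coeff_one, coeff_two_sq hf]

theorem coeff_three_substInto (hf : constantCoeff f = 0) :
    coeff 3 (f.substInto g) = coeff 1 g * coeff 3 f + coeff 2 g * (2 * coeff 1 f * coeff 2 f)
      + coeff 3 g * coeff 1 f ^ 3 := by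
  simp [coeff_substInto, sum_range_succ, coeff_one, coeff_three_sq hf, coeff_three_cube hf]

end Composition

section Exponential

variable {R : Type*} [CommRing R] [Algebra ℚ R] {f : PowerSeries R}

theorem coeff_zero_expAt (f : PowerSeries R) : coeff 0 (expAt f) = 1 := by
  simp [expAt, constantCoeff_substInto]

theorem coeff_one_expAt (f : PowerSeries R) : coeff 1 (expAt f) = coeff 1 f := by
  simp [expAt, coeff_one_substInto]

theorem coeff_two_expAt (hf : constantCoeff f = 0) :
    coeff 2 (expAt f) = coeff 2 f + (2⁻¹ : ℚ) • coeff 1 f ^ 2 := by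
  simp [expAt, coeff_two_substInto _ hf, Algebra.smul_def]

theorem coeff_three_expAt (hf : constantCoeff f = 0) :
    coeff 3 (expAt f) = coeff 3 f + coeff 1 f * coeff 2 f + (6⁻¹ : ℚ) • coeff 1 f ^ 3 := by
  have half : algebraMap ℚ R 2⁻¹ * 2 = 1 := by
    rw [← map_ofNat (algebraMap ℚ R) 2, ← map_mul]
    norm_num
  simp [expAt, coeff_three_substInto _ hf, Algebra.smul_def, Nat.factorial]
  linear_combination coeff 1 f * coeff 2 f * half

end Exponential

theorem coeff_eq_of_substInto_eq_X {R : Type*} [CommRing R] {z q : PowerSeries R}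
    (hz : constantCoeff z = 0) (hq : coeff 1 q = 1) (h : z.substInto q = X) :
    coeff 1 z = 1 ∧ coeff 2 z = -coeff 2 q ∧ coeff 3 z = 2 * coeff 2 q ^ 2 - coeff 3 q := by
  have h1 := congrArg (coeff 1) h
  have h2 := congrArg (coeff 2) h
  have h3 := congrArg (coeff 3) h
  rw [coeff_one_substInto, hq, one_mul, coeff_X] at h1
  rw [coeff_two_substInto _ hz, hq, one_mul, h1, coeff_X] at h2
  rw [coeff_three_substInto _ hz, hq, one_mul, h1, coeff_X] at h3
  simp at h1 h2 h3
  refine ⟨h1, eq_neg_of_add_eq_zero_left h2, ?_⟩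
  rw [eq_neg_of_add_eq_zero_left h2] at h3
  linear_combination h3

end PowerSeries

theorem constantCoeff_aP2 : constantCoeff aP2 = 0 := by
  simp [aP2, ← coeff_zero_eq_constantCoeff_apply]

theorem coeff_one_aP2 : coeff 1 aP2 = 2 := by
  norm_num [aP2, Nat.factorial]

theorem coeff_two_aP2 : coeff 2 aP2 = 15 := by
  norm_num [aP2, Nat.factorial]

theorem coeff_three_aP2 : coeff 3 aP2 = 560 / 3 := by
  norm_num [aP2, Nat.factorial]

theorem coeff_three_mul_rescale_aP2 (n : ℕ) :
    coeff n (3 * rescale (-1 : ℚ) aP2) = 3 * (-1) ^ n * coeff n aP2 := by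
  rw [← map_ofNat C 3, coeff_C_mul, coeff_rescale, mul_assoc]

theorem coeff_one_closedMirrorMapP2 : coeff 1 closedMirrorMapP2 = 1 := by
  simp [closedMirrorMapP2, coeff_succ_X_mul, coeff_zero_expAt]

theorem coeff_two_closedMirrorMapP2 : coeff 2 closedMirrorMapP2 = -6 := by
  rw [closedMirrorMapP2, coeff_succ_X_mul, coeff_one_expAt, coeff_three_mul_rescale_aP2,
    coeff_one_aP2]
  norm_num

theorem coeff_three_closedMirrorMapP2 : coeff 3 closedMirrorMapP2 = 63 := by
  have h0 : constantCoeff (3 * rescale (-1 : ℚ) aP2) = 0 := by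
    rw [← coeff_zero_eq_constantCoeff_apply, coeff_three_mul_rescale_aP2]
    simp [constantCoeff_aP2]
  rw [closedMirrorMapP2, coeff_succ_X_mul, coeff_two_expAt h0, coeff_three_mul_rescale_aP2,
    coeff_three_mul_rescale_aP2, coeff_one_aP2, coeff_two_aP2, smul_eq_mul]
  norm_num

/-- **Example 1.1, open mirror map in the symplectic parameter**: if `z(Q)` is the
compositional inverse of the closed mirror map `Q(z) = z·exp(3·a(−z))` — the unique power
series with zero constant term satisfying `Q(z(Q)) = Q` — then
`M(Q) = exp(a(−z(Q)))` satisfies `M(Q) ≡ 1 − 2Q + 5Q² − 32Q³ (mod Q⁴)`. -/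
theorem openMirrorMap_P2_in_Q_expansion
    (zQ : PowerSeries ℚ) (h0 : PowerSeries.constantCoeff zQ = 0)
    (hinv : PowerSeries.substInto zQ closedMirrorMapP2 = PowerSeries.X) :
    (PowerSeries.coeff 0)
        (PowerSeries.expAt (PowerSeries.substInto zQ (PowerSeries.rescale (-1 : ℚ) aP2))) = 1 ∧
      (PowerSeries.coeff 1)
        (PowerSeries.expAt (PowerSeries.substInto zQ (PowerSeries.rescale (-1 : ℚ) aP2))) = -2 ∧
      (PowerSeries.coeff 2)
        (PowerSeries.expAt (PowerSeries.substInto zQ (PowerSeries.rescale (-1 : ℚ) aP2))) = 5 ∧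
      (PowerSeries.coeff 3)
        (PowerSeries.expAt (PowerSeries.substInto zQ (PowerSeries.rescale (-1 : ℚ) aP2))) = -32 := by
  obtain ⟨hz1, hz2, hz3⟩ := coeff_eq_of_substInto_eq_X h0 coeff_one_closedMirrorMapP2 hinv
  rw [coeff_two_closedMirrorMapP2, neg_neg] at hz2
  rw [coeff_two_closedMirrorMapP2, coeff_three_closedMirrorMapP2] at hz3
  norm_num at hz3
  set A := zQ.substInto (rescale (-1 : ℚ) aP2)
  have hA0 : constantCoeff A = 0 := by
    rw [constantCoeff_substInto, ← coeff_zero_eq_constantCoeff_apply, coeff_rescale]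
    simp [constantCoeff_aP2]
  have hA1 : coeff 1 A = -2 := by
    simp [A, coeff_one_substInto, hz1, coeff_one_aP2]
  have hA2 : coeff 2 A = 3 := by
    simp [A, coeff_two_substInto _ h0, hz1, hz2, coeff_one_aP2, coeff_two_aP2]
    norm_num
  have hA3 : coeff 3 A = -74 / 3 := by
    simp [A, coeff_three_substInto _ h0, hz1, hz2, hz3, coeff_one_aP2, coeff_two_aP2,
      coeff_three_aP2]
    norm_num
  refine ⟨coeff_zero_expAt A, ?_, ?_, ?_⟩
  · rw [coeff_one_expAt, hA1]
  · rw [coeff_two_expAt hA0, hA1, hA2, smul_eq_mul]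
    norm_num
  · rw [coeff_three_expAt hA0, hA1, hA2, hA3, smul_eq_mul]
    norm_num
end
end

section
/- In the Laurent polynomial ring in two variables x, y over ℚ[z₁, z₂], consider W₃ = x + y + z₁·x^{−1} + z₁z₂·y·x^{−1}·(1 + z₁·x^{−1}y^{−1})² (the corrected potential ϑ₁(𝔽₃) in the CPS chamber, i.e. W₃ = x + y + z₁/x + z₁z₂y/x + 2z₁²z₂/x² + z₁³z₂/(x³y)) and W₁' = x + y + z₁·x^{−1} + z₁²z₂·x^{−1}y^{−1} (the Hori–Vafa potential of 𝔽₁ with z₂ replaced by z₁z₂). Then for every integer k ≥ 1 the constant terms agree: const(W₃^k) = const(W₁'^k). In particular the classical periods of the potentials of 𝔽₃ and 𝔽₁ coincide under the substitution z₂ ↦ z₁z₂. -/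
/-!
Put `w = y + z₁/x` and `u = x + w = x + y + z₁/x`. Then `W₃ = u + z₁z₂ · w²/(xy)` and
`W₁' = u + z₁z₂ · z₁/(xy)`, so by the binomial theorem it suffices that
`const (u^p w^(2q) (xy)^(-q)) = const (u^p z₁^q (xy)^(-q))` for all `p, q`.

Grade the monomial `x^a y^b` by `a - b`: then `x` has degree `1`, `w` degree `-1`, and `xy` and
`x w = xy + z₁` degree `0`. In `u^p = ∑ C(p,k) x^k w^(p-k)` only the term of total degree zero
contributes to the constant term, and it is a power of `xy + z₁`. For `p = 2m` both constant
terms come out as `C(2m,m) C(m,q) z₁^m`; for odd `p` both vanish.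
-/

noncomputable section

/-- The ring of Laurent polynomials in two variables `x, y` over `ℚ[z₁, z₂]`,
as the group algebra `ℚ[z₁,z₂][ℤ²]`. -/
abbrev LaurentZZ : Type := AddMonoidAlgebra (MvPolynomial (Fin 2) ℚ) (ℤ × ℤ)

/-- The parameter `z₁`. -/
def z₁ : MvPolynomial (Fin 2) ℚ := MvPolynomial.X 0

/-- The parameter `z₂`. -/
def z₂ : MvPolynomial (Fin 2) ℚ := MvPolynomial.X 1

/-- The corrected potential `ϑ₁(𝔽₃)` in the CPS chamber:
`W₃ = x + y + z₁/x + z₁z₂·y/x + 2z₁²z₂/x² + z₁³z₂/(x³y)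
    = x + y + z₁/x + z₁z₂·(y/x)·(1 + z₁/(xy))²`. -/
def W₃ : LaurentZZ :=
  AddMonoidAlgebra.single ((1, 0) : ℤ × ℤ) 1 +
    AddMonoidAlgebra.single ((0, 1) : ℤ × ℤ) 1 +
      AddMonoidAlgebra.single ((-1, 0) : ℤ × ℤ) z₁ +
        AddMonoidAlgebra.single ((-1, 1) : ℤ × ℤ) (z₁ * z₂) +
          AddMonoidAlgebra.single ((-2, 0) : ℤ × ℤ) (2 * z₁ ^ 2 * z₂) +
            AddMonoidAlgebra.single ((-3, -1) : ℤ × ℤ) (z₁ ^ 3 * z₂)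

/-- The Hori–Vafa potential of `𝔽₁` with `z₂` replaced by `z₁z₂`:
`W₁' = x + y + z₁/x + z₁²z₂/(xy)`. -/
def W₁' : LaurentZZ :=
  AddMonoidAlgebra.single ((1, 0) : ℤ × ℤ) 1 +
    AddMonoidAlgebra.single ((0, 1) : ℤ × ℤ) 1 +
      AddMonoidAlgebra.single ((-1, 0) : ℤ × ℤ) z₁ +
        AddMonoidAlgebra.single ((-1, -1) : ℤ × ℤ) (z₁ ^ 2 * z₂)

namespace AddMonoidAlgebra

theorem coeff_eq_zero_of_mem_gradeBy {M ι R : Type*} [CommSemiring R] {f : M → ι} {i : ι}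
    {F : R[M]} (hF : F ∈ gradeBy R f i) {m : M} (hm : f m ≠ i) : F.coeff m = 0 :=
  Finsupp.notMem_support_iff.1 fun h => hm (hF m h)

theorem coeff_add_pow_eq_of_coeff_pow_mul_pow_eq {R M : Type*} [CommSemiring R] [AddCommMonoid M]
    {f g h : R[M]} {m : M} (H : ∀ i j, (f ^ i * g ^ j).coeff m = (f ^ i * h ^ j).coeff m)
    (n : ℕ) : ((f + g) ^ n).coeff m = ((f + h) ^ n).coeff m := by
  simp only [add_pow, coeff_sum, Finsupp.finsetSum_apply, ← nsmul_eq_mul', coeff_smul_apply, H]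

end AddMonoidAlgebra

theorem Nat.choose_add_mul_choose (n m q : ℕ) :
    n.choose (m + q) * (m + q).choose q = n.choose m * (n - m).choose q := by
  rw [← Nat.choose_symm_add, Nat.choose_mul (Nat.le_add_right m q), Nat.add_sub_cancel_left]

namespace HirzebruchPotential

open AddMonoidAlgebra

def xyDeg : ℤ × ℤ →+ ℤ := AddMonoidHom.fst ℤ ℤ - AddMonoidHom.snd ℤ ℤ

def x : LaurentZZ := single (1, 0) 1

def w : LaurentZZ := single (0, 1) 1 + single (-1, 0) z₁

def u : LaurentZZ := x + w

def xyInv : LaurentZZ := single (-1, -1) 1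

theorem W₃_eq : W₃ = u + (z₁ * z₂) • (w ^ 2 * xyInv) := by
  have h2 : (2 : MvPolynomial (Fin 2) ℚ) * z₁ ^ 2 * z₂ = z₁ * z₂ * z₁ + z₁ * z₂ * z₁ := by
    ring
  rw [W₃, h2, single_add]
  simp only [u, x, w, xyInv, sq, add_mul, mul_add, single_mul_single, smul_add, smul_single',
    Prod.mk_add_mk]
  ring_nf

theorem W₁'_eq : W₁' = u + (z₁ * z₂) • (single 0 z₁ * xyInv) := by
  simp only [W₁', u, x, w, xyInv, single_mul_single, smul_single']
  ring_nf

abbrev xyGrade (i : ℤ) : Submodule (MvPolynomial (Fin 2) ℚ) LaurentZZ := gradeBy _ xyDeg i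

theorem single_mem_xyGrade (a b : ℤ) (c : MvPolynomial (Fin 2) ℚ) :
    single (a, b) c ∈ xyGrade (a - b) :=
  single_mem_gradeBy _ _ _

theorem x_mem_xyGrade : x ∈ xyGrade 1 := single_mem_xyGrade 1 0 1

theorem w_mem_xyGrade : w ∈ xyGrade (-1) :=
  add_mem (single_mem_xyGrade 0 1 1) (single_mem_xyGrade (-1) 0 z₁)

theorem xyInv_mem_xyGrade : xyInv ∈ xyGrade 0 := single_mem_xyGrade (-1) (-1) 1

theorem xyInv_pow_mem_xyGrade (q : ℕ) : xyInv ^ q ∈ xyGrade 0 := by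
  simpa using SetLike.pow_mem_graded q xyInv_mem_xyGrade

theorem coeff_zero_x_pow_mul_w_pow_mul {a b : ℕ} (hab : a ≠ b) {G : LaurentZZ}
    (hG : G ∈ xyGrade 0) : (x ^ a * w ^ b * G).coeff 0 = 0 := by
  have hmem : x ^ a * w ^ b * G ∈ xyGrade (a • 1 + b • (-1) + 0) :=
    SetLike.mul_mem_graded (SetLike.mul_mem_graded (SetLike.pow_mem_graded a x_mem_xyGrade)
      (SetLike.pow_mem_graded b w_mem_xyGrade)) hG
  refine coeff_eq_zero_of_mem_gradeBy hmem ?_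
  simp only [map_zero, Int.nsmul_eq_mul, mul_one, mul_neg, add_zero]
  omega

theorem x_mul_w : x * w = single (1, 1) 1 + single 0 z₁ := by
  simp [x, w, mul_add, single_mul_single, Prod.mk_zero_zero]

theorem coeff_zero_x_mul_w_pow_mul_xyInv_pow (n q : ℕ) :
    ((x * w) ^ n * xyInv ^ q).coeff 0 = n.choose q * z₁ ^ (n - q) := by
  rw [x_mul_w, add_pow, Finset.sum_mul, coeff_sum, Finsupp.finsetSum_apply, xyInv]
  simp only [← nsmul_eq_mul', smul_mul_assoc, coeff_smul_apply, single_pow, single_mul_single,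
    coeff_single, Finsupp.single_apply]
  rw [Finset.sum_eq_single q]
  · simp
  · intro r _ hr
    rw [if_neg, smul_zero]
    simp [Prod.ext_iff, ← sub_eq_add_neg, sub_eq_zero, hr]
  · intro hq
    simp [Nat.choose_eq_zero_of_lt (Finset.mem_range_succ_iff.not.1 hq |> Nat.lt_of_not_le)]

theorem coeff_zero_u_pow_mul_eq_sum (p e : ℕ) (G : LaurentZZ) :
    (u ^ p * w ^ e * G).coeff 0 =
      ∑ k ∈ Finset.range (p + 1), p.choose k • (x ^ k * w ^ (p - k + e) * G).coeff 0 := by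
  simp only [u, add_pow, Finset.sum_mul, coeff_sum, Finsupp.finsetSum_apply, ← nsmul_eq_mul',
    smul_mul_assoc, coeff_smul_apply, mul_assoc, ← pow_add]

theorem coeff_zero_u_pow_mul {p e n : ℕ} (hpe : p + e = 2 * n) {G : LaurentZZ}
    (hG : G ∈ xyGrade 0) :
    (u ^ p * w ^ e * G).coeff 0 = p.choose n • ((x * w) ^ n * G).coeff 0 := by
  rw [coeff_zero_u_pow_mul_eq_sum, Finset.sum_eq_single n]
  · rcases le_or_gt n p with hn | hn
    · rw [mul_pow, show p - n + e = n by omega]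
    · rw [Nat.choose_eq_zero_of_lt hn, zero_smul, zero_smul]
  · intro k hk hkn
    rw [Finset.mem_range] at hk
    rw [coeff_zero_x_pow_mul_w_pow_mul (by omega) hG, smul_zero]
  · intro hn
    rw [Nat.choose_eq_zero_of_lt (by simpa using hn), zero_smul]

theorem coeff_zero_u_pow_mul_of_odd {p e : ℕ} (hpe : Odd (p + e)) {G : LaurentZZ}
    (hG : G ∈ xyGrade 0) : (u ^ p * w ^ e * G).coeff 0 = 0 := by
  obtain ⟨c, hc⟩ := hpe
  rw [coeff_zero_u_pow_mul_eq_sum]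
  refine Finset.sum_eq_zero fun k hk => ?_
  rw [Finset.mem_range] at hk
  rw [coeff_zero_x_pow_mul_w_pow_mul (by omega) hG, smul_zero]

theorem coeff_zero_u_pow_mul_w_pow_mul_xyInv_pow (m q : ℕ) :
    (u ^ (2 * m) * w ^ (2 * q) * xyInv ^ q).coeff 0 =
      (2 * m).choose m * m.choose q * z₁ ^ m := by
  rw [coeff_zero_u_pow_mul (n := m + q) (by ring) (xyInv_pow_mem_xyGrade q),
    coeff_zero_x_mul_w_pow_mul_xyInv_pow, Nat.add_sub_cancel, nsmul_eq_mul, ← mul_assoc,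
    ← Nat.cast_mul, Nat.choose_add_mul_choose, show 2 * m - m = m by omega, Nat.cast_mul]

theorem coeff_zero_u_pow_mul_xyInv_pow (m q : ℕ) :
    (u ^ (2 * m) * xyInv ^ q).coeff 0 = (2 * m).choose m * m.choose q * z₁ ^ (m - q) := by
  simpa [coeff_zero_x_mul_w_pow_mul_xyInv_pow, mul_assoc] using
    coeff_zero_u_pow_mul (e := 0) (n := m) (by ring) (xyInv_pow_mem_xyGrade q)

theorem coeff_zero_u_pow_mul_pow_eq (p q : ℕ) :
    (u ^ p * (w ^ 2 * xyInv) ^ q).coeff 0 = (u ^ p * (single 0 z₁ * xyInv) ^ q).coeff 0 := by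
  have hv : u ^ p * (w ^ 2 * xyInv) ^ q = u ^ p * w ^ (2 * q) * xyInv ^ q := by ring
  have ht : u ^ p * (single 0 z₁ * xyInv) ^ q = single 0 (z₁ ^ q) * (u ^ p * xyInv ^ q) := by
    rw [mul_pow, single_pow, smul_zero]
    ring
  rw [hv, ht, coeff_single_zero_mul]
  obtain ⟨m, rfl | rfl⟩ := Nat.even_or_odd' p
  · rw [coeff_zero_u_pow_mul_w_pow_mul_xyInv_pow, coeff_zero_u_pow_mul_xyInv_pow]
    rcases le_or_gt q m with hqm | hmq
    · rw [mul_left_comm, ← pow_add, Nat.add_sub_cancel' hqm]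
    · simp [Nat.choose_eq_zero_of_lt hmq]
  · have hodd := odd_two_mul_add_one m
    have hG := xyInv_pow_mem_xyGrade q
    have hu : (u ^ (2 * m + 1) * xyInv ^ q).coeff 0 = 0 := by
      simpa using coeff_zero_u_pow_mul_of_odd (e := 0) hodd hG
    rw [coeff_zero_u_pow_mul_of_odd (hodd.add_even (even_two_mul q)) hG, hu, mul_zero]

end HirzebruchPotential

/-- The classical periods of the corrected potential of `𝔽₃` and of the Hori–Vafa potential
of `𝔽₁` (with `z₂ ↦ z₁z₂`) coincide: for every `k ≥ 1`, `const(W₃^k) = const(W₁'^k)`. -/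
theorem constantTerm_pow_F3_eq_F1 :
    ∀ k : ℕ, 1 ≤ k → (W₃ ^ k).coeff ((0, 0) : ℤ × ℤ) = (W₁' ^ k).coeff ((0, 0) : ℤ × ℤ) := by
  intro k _
  rw [HirzebruchPotential.W₃_eq, HirzebruchPotential.W₁'_eq, Prod.mk_zero_zero]
  refine AddMonoidAlgebra.coeff_add_pow_eq_of_coeff_pow_mul_pow_eq (fun i j => ?_) k
  simp only [smul_pow, mul_smul_comm, AddMonoidAlgebra.coeff_smul_apply,
    HirzebruchPotential.coeff_zero_u_pow_mul_pow_eq]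
end
end

section
/- In the ring of Laurent polynomials in two variables x, y over ℚ, let f = 2x + xy + y + x^{−1} + x^{−1}y^{−1} + 2y^{−1} + xy^{−1} and g = y + xy + 5x + 2x² + x^{−1}y^{−1} + 4y^{−1} + 6xy^{−1} + 4x²y^{−1} + x³y^{−1}. Then for every integer k ≥ 1 the constant terms agree: const(f^k) = const(g^k); equivalently, f and g have the same classical period. (For example const(f²) = const(g²) = 10, const(f³) = const(g³) = 30, const(f⁴) = const(g⁴) = 270.) -/
/-! `f` and `g` are linked by a chain of three mutations `f → f'`, `f' → g'`, `g → g'`. Slice a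
Laurent polynomial in `x, y` along a lattice basis, so that it becomes a Laurent polynomial in one
variable `t` whose coefficients are Laurent polynomials in one variable. A mutation with factor
`c` multiplies the coefficient of `t^d` by `c^d`; once `c` is inverted this is the ring
automorphism `t ↦ c t`, which fixes the coefficient of `t⁰`, and so it preserves the constant
terms of all powers. -/

noncomputable section

/-- The ring of Laurent polynomials in two variables `x, y` over `ℚ`,
as the group algebra `ℚ[ℤ²]`; the monomial `x^{v₁} y^{v₂}` corresponds to `(v₁, v₂) ∈ ℤ²`. -/
abbrev LaurentQ : Type := AddMonoidAlgebra ℚ (ℤ × ℤ)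

/-- The potential `ϑ₁` (with curve-class parameters set to `1`) of the Fano toric
degeneration of `dP₅ = Bl⁴ℙ²`:
`f = 2x + xy + y + x⁻¹ + x⁻¹y⁻¹ + 2y⁻¹ + xy⁻¹`. -/
def fdP5 : LaurentQ :=
  AddMonoidAlgebra.single ((1, 0) : ℤ × ℤ) 2 +
    AddMonoidAlgebra.single ((1, 1) : ℤ × ℤ) 1 +
      AddMonoidAlgebra.single ((0, 1) : ℤ × ℤ) 1 +
        AddMonoidAlgebra.single ((-1, 0) : ℤ × ℤ) 1 +
          AddMonoidAlgebra.single ((-1, -1) : ℤ × ℤ) 1 +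
            AddMonoidAlgebra.single ((0, -1) : ℤ × ℤ) 2 +
              AddMonoidAlgebra.single ((1, -1) : ℤ × ℤ) 1

/-- The potential `ϑ₁` (with curve-class parameters set to `1`) of the non-Fano toric
degeneration of `dP₅ = Bl⁴ℙ²`:
`g = y + xy + 5x + 2x² + x⁻¹y⁻¹ + 4y⁻¹ + 6xy⁻¹ + 4x²y⁻¹ + x³y⁻¹`. -/
def gdP5 : LaurentQ :=
  AddMonoidAlgebra.single ((0, 1) : ℤ × ℤ) 1 +
    AddMonoidAlgebra.single ((1, 1) : ℤ × ℤ) 1 +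
      AddMonoidAlgebra.single ((1, 0) : ℤ × ℤ) 5 +
        AddMonoidAlgebra.single ((2, 0) : ℤ × ℤ) 2 +
          AddMonoidAlgebra.single ((-1, -1) : ℤ × ℤ) 1 +
            AddMonoidAlgebra.single ((0, -1) : ℤ × ℤ) 4 +
              AddMonoidAlgebra.single ((1, -1) : ℤ × ℤ) 6 +
                AddMonoidAlgebra.single ((2, -1) : ℤ × ℤ) 4 +
                  AddMonoidAlgebra.single ((3, -1) : ℤ × ℤ) 1

open AddMonoidAlgebra LaurentPolynomial

namespace LaurentPolynomial

variable {R : Type*}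

section CommSemiring

variable [CommSemiring R]

def rescale (u : Rˣ) : R[T;T⁻¹] →ₐ[R] R[T;T⁻¹] :=
  lift R R[T;T⁻¹] ℤ
    { toFun n := C (↑(u ^ n.toAdd) : R) * T n.toAdd
      map_one' := by simp
      map_mul' a b := by simp only [toAdd_mul, zpow_add, Units.val_mul, map_mul, T_add]; ring }

theorem coeff_rescale (u : Rˣ) (p : R[T;T⁻¹]) (n : ℤ) :
    (rescale u p).coeff n = ↑(u ^ n) * p.coeff n := by
  induction p using AddMonoidAlgebra.induction_linear with
  | zero => simp
  | add p q hp hq => simp [hp, hq, mul_add]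
  | single m r =>
    rcases eq_or_ne m n with rfl | hne
    · simp [rescale, ← single_eq_C_mul_T, mul_comm]
    · simp [rescale, ← single_eq_C_mul_T, hne]

/-- `Q` is the mutation of `P` with factor `c`: `Q_d = c^d P_d` for every `d : ℤ`, written as
`c^{-d} Q_d = P_d` when `d < 0` so that `c` need not be invertible. -/
def IsMutation (c : R) (P Q : R[T;T⁻¹]) : Prop :=
  ∀ d : ℤ, c ^ (-d).toNat * Q.coeff d = c ^ d.toNat * P.coeff d

variable {c : R}

theorem IsMutation.add {P₁ P₂ Q₁ Q₂ : R[T;T⁻¹]} (h₁ : IsMutation c P₁ Q₁)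
    (h₂ : IsMutation c P₂ Q₂) : IsMutation c (P₁ + P₂) (Q₁ + Q₂) := fun d => by
  simp only [coeff_add, Finsupp.add_apply, mul_add, h₁ d, h₂ d]

theorem isMutation_C_mul_T {p q : R} (d : ℤ) (h : c ^ (-d).toNat * q = c ^ d.toNat * p) :
    IsMutation c (C p * T d) (C q * T d) := fun n => by
  rcases eq_or_ne d n with rfl | hne
  · simpa [← single_eq_C_mul_T] using h
  · simp [← single_eq_C_mul_T, hne]

end CommSemiring

theorem one_add_T_ne_zero [Semiring R] [Nontrivial R] {n : ℤ} (hn : n ≠ 0) :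
    (1 + T n : R[T;T⁻¹]) ≠ 0 := fun h => by
  have h₀ := congrArg (·.coeff 0) h
  simp only [T, ← single_zero_one_eq_one, coeff_add, coeff_single, Finsupp.add_apply,
    Finsupp.single_apply, if_pos, hn] at h₀
  simp at h₀

theorem IsMutation.coeff_zero_pow [CommRing R] {c : R} {P Q : R[T;T⁻¹]} (h : IsMutation c P Q)
    (hc : c ∈ nonZeroDivisors R) (k : ℕ) : (Q ^ k).coeff 0 = (P ^ k).coeff 0 := by
  let S := Localization.Away c
  let φ : R[T;T⁻¹] →+* S[T;T⁻¹] := mapRingHom ℤ (algebraMap R S)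
  let u : Sˣ := (IsLocalization.Away.algebraMap_isUnit c).unit
  have hQ : φ Q = rescale u (φ P) := by
    refine LaurentPolynomial.ext fun d => ?_
    have hu : u ^ d = u ^ d.toNat * (u ^ (-d).toNat)⁻¹ := by
      rw [← zpow_natCast, ← zpow_natCast, ← zpow_neg, ← zpow_add, ← sub_eq_add_neg,
        Int.toNat_sub_toNat_neg]
    rw [coeff_rescale, hu, Units.val_mul, mul_comm, ← mul_assoc, Units.eq_mul_inv_iff_mul_eq]
    simp only [φ, u, coeff_mapRingHom, Units.val_pow_eq_pow_val, IsUnit.unit_spec, ← map_pow,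
      ← map_mul, mul_comm _ (c ^ _), h d]
  have hQk := congrArg (fun p => (p ^ k).coeff 0) hQ
  simp only [← map_pow, coeff_rescale, zpow_zero, Units.val_one, one_mul, φ,
    coeff_mapRingHom] at hQk
  exact IsLocalization.injective S (Submonoid.powers_le.mpr hc) hQk

end LaurentPolynomial

section Slice

variable {R : Type*} [CommSemiring R]

def slice (e : ℤ × ℤ ≃+ ℤ × ℤ) : AddMonoidAlgebra R (ℤ × ℤ) ≃ₐ[R] R[T;T⁻¹][T;T⁻¹] :=
  (domCongr R R e).trans (curryAlgEquiv R)

theorem slice_single (e : ℤ × ℤ ≃+ ℤ × ℤ) (v : ℤ × ℤ) (r : R) :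
    slice e (single v r) = C (C r * T (e v).2) * T (e v).1 := by
  rw [slice, AlgEquiv.trans_apply, domCongr_single, ← Prod.mk.eta (p := e v),
    curryAlgEquiv_single, single_eq_C_mul_T, single_eq_C_mul_T]

theorem coeff_zero_coeff_zero_slice (e : ℤ × ℤ ≃+ ℤ × ℤ) (p : AddMonoidAlgebra R (ℤ × ℤ)) :
    ((slice e p).coeff 0).coeff 0 = p.coeff 0 := by
  change (domCongr R R e p).coeff 0 = _
  simp

end Slice

theorem coeff_zero_pow_eq_of_isMutation_slice {R : Type*} [CommRing R] {e : ℤ × ℤ ≃+ ℤ × ℤ}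
    {c : R[T;T⁻¹]} (hc : c ∈ nonZeroDivisors _) {p q : AddMonoidAlgebra R (ℤ × ℤ)}
    (h : IsMutation c (slice e p) (slice e q)) (k : ℕ) : (q ^ k).coeff 0 = (p ^ k).coeff 0 := by
  rw [← coeff_zero_coeff_zero_slice e, ← coeff_zero_coeff_zero_slice e (p ^ k), map_pow, map_pow,
    h.coeff_zero_pow hc]

namespace dP5

/-- Slicing along `shear` reads `x^a y^b = x^{a-b} (xy)^b` in the basis `x, xy`. -/
def shear : ℤ × ℤ ≃+ ℤ × ℤ where
  toFun v := (v.1 - v.2, v.2)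
  invFun v := (v.1 + v.2, v.2)
  left_inv v := by simp
  right_inv v := by simp
  map_add' v w := by simp only [Prod.fst_add, Prod.snd_add, Prod.mk_add_mk]; abel_nf

def fdP5' : LaurentQ :=
  single ((0, 1) : ℤ × ℤ) 1 + single ((1, 1) : ℤ × ℤ) 3 + single ((2, 1) : ℤ × ℤ) 3 +
    single ((3, 1) : ℤ × ℤ) 1 + single ((1, 0) : ℤ × ℤ) 2 + single ((-1, 0) : ℤ × ℤ) 1 +
      single ((-1, -1) : ℤ × ℤ) 1

def gdP5' : LaurentQ :=
  single ((0, 1) : ℤ × ℤ) 1 + single ((1, 1) : ℤ × ℤ) 3 + single ((2, 1) : ℤ × ℤ) 3 +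
    single ((3, 1) : ℤ × ℤ) 1 + single ((1, 0) : ℤ × ℤ) 5 + single ((2, 0) : ℤ × ℤ) 2 +
      single ((0, -1) : ℤ × ℤ) 2 + single ((1, -1) : ℤ × ℤ) 1 + single ((-1, -1) : ℤ × ℤ) 1

theorem slice_prodComm_fdP5 : slice .prodComm fdP5 =
    C (T (-1) + 2 + T 1) * T (-1) + C (2 * T 1 + T (-1)) * T 0 + C (1 + T 1) * T 1 := by
  simp only [fdP5, map_add, slice_single, AddEquiv.coe_prodComm, Prod.swap_prod_mk, map_mul,
    map_ofNat, T_zero, map_one, one_mul]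
  ring

theorem slice_prodComm_fdP5' : slice .prodComm fdP5' =
    C (T (-1)) * T (-1) + C (2 * T 1 + T (-1)) * T 0 +
      C (1 + 3 * T 1 + 3 * T 2 + T 3) * T 1 := by
  simp only [fdP5', map_add, slice_single, AddEquiv.coe_prodComm, Prod.swap_prod_mk, map_mul,
    map_ofNat, T_zero, map_one, one_mul]
  ring

theorem slice_prodComm_gdP5 : slice .prodComm gdP5 =
    C (T (-1) + 4 + 6 * T 1 + 4 * T 2 + T 3) * T (-1) + C (5 * T 1 + 2 * T 2) * T 0 +
      C (1 + T 1) * T 1 := by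
  simp only [gdP5, map_add, slice_single, AddEquiv.coe_prodComm, Prod.swap_prod_mk, map_mul,
    map_ofNat, T_zero, map_one, one_mul]
  ring

theorem slice_prodComm_gdP5' : slice .prodComm gdP5' =
    C (T (-1) + 2 + T 1) * T (-1) + C (5 * T 1 + 2 * T 2) * T 0 +
      C (1 + 3 * T 1 + 3 * T 2 + T 3) * T 1 := by
  simp only [gdP5', map_add, slice_single, AddEquiv.coe_prodComm, Prod.swap_prod_mk, map_mul,
    map_ofNat, T_zero, map_one, one_mul]
  ring

theorem slice_shear_fdP5' : slice shear fdP5' =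
    C (T 1 + 1) * T (-1) + C (3 * T 1 + T (-1)) * T 0 + C (3 * T 1 + 2) * T 1 +
      C (T 1) * T 2 := by
  simp only [fdP5', map_add, slice_single, shear, AddEquiv.coe_mk, Equiv.coe_fn_mk]
  norm_num [map_ofNat]
  ring

theorem slice_shear_gdP5' : slice shear gdP5' =
    C (T 1) * T (-1) + C (3 * T 1 + T (-1)) * T 0 + C (3 * T 1 + 5 + 2 * T (-1)) * T 1 +
      C (T 1 + 2 + T (-1)) * T 2 := by
  simp only [gdP5', map_add, slice_single, shear, AddEquiv.coe_mk, Equiv.coe_fn_mk]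
  norm_num [map_ofNat]
  ring

theorem isMutation_fdP5 :
    IsMutation ((1 + T 1) ^ 2) (slice .prodComm fdP5) (slice .prodComm fdP5') := by
  rw [slice_prodComm_fdP5, slice_prodComm_fdP5']
  refine ((isMutation_C_mul_T _ ?_).add (isMutation_C_mul_T _ ?_)).add (isMutation_C_mul_T _ ?_)
  all_goals
    simp only [Int.reduceNeg, Int.reduceToNat, neg_neg] <;>
    ring_nf <;>
    simp only [T_pow, ← T_add, Nat.cast_ofNat, Int.reduceMul, Int.reduceAdd, T_zero] <;>
    ring

theorem isMutation_gdP5 :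
    IsMutation ((1 + T 1) ^ 2) (slice .prodComm gdP5) (slice .prodComm gdP5') := by
  rw [slice_prodComm_gdP5, slice_prodComm_gdP5']
  refine ((isMutation_C_mul_T _ ?_).add (isMutation_C_mul_T _ ?_)).add (isMutation_C_mul_T _ ?_)
  all_goals
    simp only [Int.reduceNeg, Int.reduceToNat, neg_neg] <;>
    ring_nf <;>
    simp only [T_pow, ← T_add, Nat.cast_ofNat, Int.reduceMul, Int.reduceAdd, T_zero] <;>
    ring

theorem isMutation_fdP5' : IsMutation (1 + T (-1)) (slice shear fdP5') (slice shear gdP5') := by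
  rw [slice_shear_fdP5', slice_shear_gdP5']
  refine (((isMutation_C_mul_T _ ?_).add (isMutation_C_mul_T _ ?_)).add
    (isMutation_C_mul_T _ ?_)).add (isMutation_C_mul_T _ ?_)
  all_goals
    simp only [Int.reduceNeg, Int.reduceToNat, neg_neg] <;>
    ring_nf <;>
    simp only [T_pow, ← T_add, Nat.cast_ofNat, Int.reduceMul, Int.reduceAdd, T_zero] <;>
    ring

end dP5

/-- The two mutation-equivalent potentials of `dP₅` (Section 10.1) have the same constant
terms of all powers, i.e. the same classical period: `const(f^k) = const(g^k)` for all
`k ≥ 1`. -/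
theorem constantTerm_pow_dP5_eq :
    ∀ k : ℕ, 1 ≤ k → (fdP5 ^ k).coeff ((0, 0) : ℤ × ℤ) = (gdP5 ^ k).coeff ((0, 0) : ℤ × ℤ) := by
  intro k _
  have hc : ((1 + T 1) ^ 2 : ℚ[T;T⁻¹]) ∈ nonZeroDivisors _ :=
    mem_nonZeroDivisors_of_ne_zero (pow_ne_zero 2 (one_add_T_ne_zero one_ne_zero))
  have hc' : (1 + T (-1) : ℚ[T;T⁻¹]) ∈ nonZeroDivisors _ :=
    mem_nonZeroDivisors_of_ne_zero (one_add_T_ne_zero (by norm_num))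
  calc (fdP5 ^ k).coeff (0, 0)
      = (dP5.fdP5' ^ k).coeff 0 :=
        (coeff_zero_pow_eq_of_isMutation_slice hc dP5.isMutation_fdP5 k).symm
    _ = (dP5.gdP5' ^ k).coeff 0 :=
        (coeff_zero_pow_eq_of_isMutation_slice hc' dP5.isMutation_fdP5' k).symm
    _ = (gdP5 ^ k).coeff (0, 0) := coeff_zero_pow_eq_of_isMutation_slice hc dP5.isMutation_gdP5 k
end
end

section
/- For natural numbers n₁, n₂ with n₂ ≥ 2n₁ and (n₁,n₂) ≠ (0,0), define the rational number c'(n₁,n₂) = (−1)^{n₁+n₂} · (3n₂−n₁−1)! / ( n₁! · (n₂−2n₁)! · (n₂!)² ). Then: (i) for all n₁, n₂ with n₂ ≥ 2n₁ + 2, (n₁+1)·(n₁−3n₂+1)·c'(n₁+1, n₂) = (2n₁−n₂)·(2n₁−n₂+1)·c'(n₁, n₂); and (ii) for all n₁, n₂ with n₂ ≥ 2n₁ and (n₁,n₂) ≠ (0,0), (n₂+1)²·(2n₁−n₂−1)·c'(n₁, n₂+1) = −(n₁−3n₂)·(n₁−3n₂−1)·(n₁−3n₂−2)·c'(n₁,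 n₂). (All factors are interpreted as integers, positive or negative, cast into ℚ.) -/
/-!
In the coordinates `n₂ = 2n₁ + k`, `3n₂ = n₁ + m + 1` none of the subtractions in `cKF3'` truncate
and the sign is `(-1)^(n₁+k)`. Each recurrence then relates two coefficients whose factorials
differ by finitely many factors `(j+1)! = (j+1)·j!`, so it reduces to a polynomial identity.
-/

noncomputable section

/-- The coefficients `c'(n₁,n₂) = (−1)^{n₁+n₂}·(3n₂−n₁−1)! / (n₁!·(n₂−2n₁)!·(n₂!)²)` of the
second solution of the Picard–Fuchs system of `K_{𝔽₃}` (meaningful for `n₂ ≥ 2n₁`,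
`(n₁,n₂) ≠ (0,0)`). -/
def cKF3' (n₁ n₂ : ℕ) : ℚ :=
  (-1) ^ (n₁ + n₂) * ((3 * n₂ - n₁ - 1).factorial : ℚ) /
    ((n₁.factorial : ℚ) * ((n₂ - 2 * n₁).factorial : ℚ) * ((n₂.factorial : ℚ)) ^ 2)

open Nat

lemma cKF3'_eq_factorial_div {n₁ n₂ k m : ℕ} (hk : n₂ = 2 * n₁ + k)
    (hm : 3 * n₂ = n₁ + m + 1) :
    cKF3' n₁ n₂ = (-1) ^ (n₁ + k) * (m ! : ℚ) / (n₁ ! * k ! * (n₂ ! : ℚ) ^ 2) := by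
  have hsign : (-1 : ℚ) ^ (n₁ + n₂) = (-1) ^ (n₁ + k) := by
    rw [hk, show n₁ + (2 * n₁ + k) = n₁ + k + 2 * n₁ by ring, pow_add, pow_mul]
    norm_num
  rw [cKF3', hsign, show 3 * n₂ - n₁ - 1 = m by omega, show n₂ - 2 * n₁ = k by omega]

theorem cKF3'_recurrence_left {n₁ n₂ : ℕ} (h : 2 * n₁ + 2 ≤ n₂) :
    ((n₁ : ℚ) + 1) * ((n₁ : ℚ) - 3 * (n₂ : ℚ) + 1) * cKF3' (n₁ + 1) n₂ =
      (2 * (n₁ : ℚ) - (n₂ : ℚ)) * (2 * (n₁ : ℚ) - (n₂ : ℚ) + 1) * cKF3' n₁ n₂ := by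
  obtain ⟨k, rfl⟩ : ∃ k, n₂ = 2 * (n₁ + 1) + k := ⟨n₂ - 2 * n₁ - 2, by omega⟩
  rw [cKF3'_eq_factorial_div (m := 5 * n₁ + 3 * k + 4) rfl (by ring),
    cKF3'_eq_factorial_div (k := k + 2) (m := 5 * n₁ + 3 * k + 4 + 1) (by ring) (by ring)]
  simp only [factorial_succ, cast_mul, cast_add, cast_one, cast_ofNat]
  field_simp
  ring

theorem cKF3'_recurrence_right {n₁ n₂ : ℕ} (h : 2 * n₁ ≤ n₂) (h0 : (n₁, n₂) ≠ (0, 0)) :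
    ((n₂ : ℚ) + 1) ^ 2 * (2 * (n₁ : ℚ) - (n₂ : ℚ) - 1) * cKF3' n₁ (n₂ + 1) =
      -(((n₁ : ℚ) - 3 * (n₂ : ℚ)) * ((n₁ : ℚ) - 3 * (n₂ : ℚ) - 1) *
          ((n₁ : ℚ) - 3 * (n₂ : ℚ) - 2)) * cKF3' n₁ n₂ := by
  obtain ⟨k, rfl⟩ : ∃ k, n₂ = 2 * n₁ + k := ⟨n₂ - 2 * n₁, by omega⟩
  -- `m = 3n₂ - n₁ - 1` exists only away from `(0,0)`, where `cKF3' 0 0` uses the junk `0 - 1 = 0`.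
  obtain ⟨m, hm⟩ : ∃ m, 5 * n₁ + 3 * k = m + 1 :=
    Nat.exists_eq_add_one.mpr (Nat.pos_of_ne_zero fun h' => h0 (by simp; omega))
  rw [cKF3'_eq_factorial_div (k := k + 1) (m := m + 1 + 1 + 1) (by ring) (by omega),
    cKF3'_eq_factorial_div rfl (by omega : 3 * (2 * n₁ + k) = n₁ + m + 1)]
  have hm' : (m : ℚ) = 5 * n₁ + 3 * k - 1 := by
    rw [eq_sub_iff_add_eq]
    exact_mod_cast hm.symm
  simp only [factorial_succ, cast_mul, cast_add, cast_one, cast_ofNat, hm']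
  field_simp
  ring

/-- **Example 11.2**: the coefficients
`c'(n₁,n₂) = (−1)^{n₁+n₂}(3n₂−n₁−1)!/(n₁!(n₂−2n₁)!(n₂!)²)` solve the two recurrences
imposed by the Picard–Fuchs operators `𝓛₁, 𝓛₂` of `K_{𝔽₃}`:
(i) `(n₁+1)(n₁−3n₂+1)·c'(n₁+1,n₂) = (2n₁−n₂)(2n₁−n₂+1)·c'(n₁,n₂)` for `n₂ ≥ 2n₁+2`;
(ii) `(n₂+1)²(2n₁−n₂−1)·c'(n₁,n₂+1) = −(n₁−3n₂)(n₁−3n₂−1)(n₁−3n₂−2)·c'(n₁,n₂)`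
for `n₂ ≥ 2n₁` with `(n₁,n₂) ≠ (0,0)`. -/
theorem cKF3'_solves_picardFuchs_recurrences :
    (∀ n₁ n₂ : ℕ, 2 * n₁ + 2 ≤ n₂ →
        ((n₁ : ℚ) + 1) * ((n₁ : ℚ) - 3 * (n₂ : ℚ) + 1) * cKF3' (n₁ + 1) n₂ =
          (2 * (n₁ : ℚ) - (n₂ : ℚ)) * (2 * (n₁ : ℚ) - (n₂ : ℚ) + 1) * cKF3' n₁ n₂) ∧
      (∀ n₁ n₂ : ℕ, 2 * n₁ ≤ n₂ → (n₁, n₂) ≠ (0, 0) →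
        ((n₂ : ℚ) + 1) ^ 2 * (2 * (n₁ : ℚ) - (n₂ : ℚ) - 1) * cKF3' n₁ (n₂ + 1) =
          -(((n₁ : ℚ) - 3 * (n₂ : ℚ)) * ((n₁ : ℚ) - 3 * (n₂ : ℚ) - 1) *
              ((n₁ : ℚ) - 3 * (n₂ : ℚ) - 2)) * cKF3' n₁ n₂) :=
  ⟨fun _ _ => cKF3'_recurrence_left, fun _ _ => cKF3'_recurrence_right⟩
end
end
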